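/- arXiv:2212.11783 — 7 statements merged into one kernel-verified Lean document; each statement's English description precedes it below -/
import Mathlib

section
/- The function f_a is differentiable at every point of ℝ² \ ({y_min, y_max} × ℝ), i.e., at every point (y₁, y₂) with y₁ ≠ y_min and y₁ ≠ y_max. -/
open Filter Asymptotics

/-- The piecewise affine dissipation function `r₀`. -/
noncomputable def r0 (b ymin ymax : ℝ) (t : ℝ) : ℝ :=
  if t ∈ Set.Icc ymin ymax then
    Real.sqrt b * ((ymax - ymin) / 2 - |t - (ymin + ymax) / 2|)
  else 0

/-- The candidate `f_a` for the convex envelope of the condensed energy. -/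
noncomputable def fa (b ymin ymax : ℝ) (y : ℝ × ℝ) : ℝ :=
  if y.1 ≤ ymin ∨ ymax ≤ y.1 then
    (1 / 2) * y.1 ^ 2 + (b / (2 * (b + 1))) * y.2 ^ 2
  else if |y.2| < r0 b ymin ymax y.1 then
    (1 / 2) * (y.1 ^ 2 + y.2 ^ 2)
  else if |y.2| < ((b + 1) / Real.sqrt b) * ((ymax - ymin) / 2) - r0 b ymin ymax y.1 / b then
    (1 / 2) * (y.1 ^ 2 + y.2 ^ 2) - (|y.2| - r0 b ymin ymax y.1) ^ 2 / (2 * (b + 1))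
  else if |y.2| ≤ ((b + 1) / Real.sqrt b) * ((ymax - ymin) / 2) then
    (1 / 2) * (y.1 ^ 2 + y.2 ^ 2) - (|y.2| - r0 b ymin ymax y.1) ^ 2 / (2 * (b + 1))
      - (b / (2 * (b + 1))) *
        (|y.2| - ((b + 1) / Real.sqrt b) * ((ymax - ymin) / 2) + r0 b ymin ymax y.1 / b) ^ 2
  else
    (1 / 2) * y.1 ^ 2 + (b / (2 * (b + 1))) * y.2 ^ 2
      + (1 / 2) * (y.1 - ymin) * (ymax - y.1)

lemma hasDerivAt_mul_abs (t : ℝ) : HasDerivAt (fun s : ℝ => s * |s|) (2 * |t|) t := by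
  rcases lt_trichotomy t 0 with ht | rfl | ht
  · have hev : ∀ᶠ s in nhds t, s * |s| = -(s * s) := by
      filter_upwards [eventually_lt_nhds ht] with s hs
      rw [abs_of_neg hs]; ring
    have h : HasDerivAt (fun s : ℝ => -(s * s)) (2 * |t|) t := by
      have := ((hasDerivAt_id' t).mul (hasDerivAt_id' t)).neg
      simpa [abs_of_neg ht, two_mul, Pi.mul_def, Pi.neg_def] using this
    exact h.congr_of_eventuallyEq hev
  · simp only [abs_zero, mul_zero]
    rw [hasDerivAt_iff_isLittleO]
    simp only [mul_zero, sub_zero, zero_mul, smul_eq_mul]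
    rw [isLittleO_iff]
    intro c hc
    filter_upwards [Metric.eventually_nhds_iff.2 ⟨c, hc, fun {x} h => h⟩] with s hs
    simp only [Real.dist_eq, sub_zero] at hs
    simp only [Real.norm_eq_abs, abs_mul, abs_abs]
    nlinarith [abs_nonneg s]
  · have hev : ∀ᶠ s in nhds t, s * |s| = s * s := by
      filter_upwards [eventually_gt_nhds ht] with s hs
      rw [abs_of_pos hs]
    have h : HasDerivAt (fun s : ℝ => s * s) (2 * |t|) t := by
      have := (hasDerivAt_id' t).mul (hasDerivAt_id' t)
      simpa [abs_of_pos ht, two_mul, Pi.mul_def] using this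
    exact h.congr_of_eventuallyEq hev

lemma diffAt_sq_max {g : ℝ × ℝ → ℝ} {p : ℝ × ℝ} (hg : DifferentiableAt ℝ g p) :
    DifferentiableAt ℝ (fun y => max (g y) 0 ^ 2) p := by
  have key : ∀ t : ℝ, max t 0 ^ 2 = (1/2) * (t ^ 2 + t * |t|) := by
    intro t
    rcases le_total t 0 with h | h
    · rw [max_eq_right h, abs_of_nonpos h]; ring
    · rw [max_eq_left h, abs_of_nonneg h]; ring
  simp_rw [key]
  refine DifferentiableAt.const_mul ?_ _
  refine (hg.pow 2).add ?_
  have habs : DifferentiableAt ℝ (fun t : ℝ => t * |t|) (g p) :=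
    (hasDerivAt_mul_abs (g p)).differentiableAt
  exact habs.comp p hg

lemma region4_id (b sb x t ymin ymax w S : ℝ) (hb : b ≠ 0) (hb1 : b + 1 ≠ 0) (hsb : sb^2 = b)
    (hw : w^2 = (x - (ymin+ymax)/2)^2) (hS : sb * S = (b+1)*((ymax-ymin)/2)) :
    (1/2)*(x^2+t^2) - (t - sb*((ymax-ymin)/2 - w))^2/(2*(b+1))
      - (b/(2*(b+1)))*(t - S + sb*((ymax-ymin)/2 - w)/b)^2
    = (1/2)*x^2 + (b/(2*(b+1)))*t^2 + (1/2)*(x-ymin)*(ymax-x)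
      - (b/(2*(b+1)))*(t - S)^2 := by
  linear_combination (norm := (field_simp; ring)) (-(b+1)*((ymax-ymin)/2-w)^2/(2*b*(b+1))) * hsb
    + (2*b*((ymax-ymin)/2-w)/(2*b*(b+1))) * hS
    + (-(b+1)*b/(2*b*(b+1))) * hw

lemma ev_lt {f g : ℝ × ℝ → ℝ} {p : ℝ × ℝ} (hf : Continuous f) (hg : Continuous g)
    (h : f p < g p) : ∀ᶠ z in nhds p, f z < g z :=
  hf.continuousAt.eventually_lt hg.continuousAt h

lemma strip_r0 (b ymin ymax z : ℝ) (h1 : ymin ≤ z) (h2 : z ≤ ymax) :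
    r0 b ymin ymax z = Real.sqrt b * ((ymax - ymin) / 2 - |z - (ymin + ymax) / 2|) := by
  simp [r0, Set.mem_Icc, h1, h2]

lemma Sexpr_eq (b ymin ymax : ℝ) (hb : 0 < b) :
    ((b+1)/Real.sqrt b) * ((ymax-ymin)/2)
      = Real.sqrt b * ((ymax-ymin)/2) + Real.sqrt b * ((ymax-ymin)/2) / b := by
  have h2 : Real.sqrt b ^ 2 = b := Real.sq_sqrt hb.le
  have hne : Real.sqrt b ≠ 0 := ne_of_gt (Real.sqrt_pos.2 hb)
  have hbne : b ≠ 0 := ne_of_gt hb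
  field_simp
  linear_combination (-(ymax-ymin)) * h2

lemma sign_abs {u : ℝ} (hu : u ≠ 0) :
    ∃ c : ℝ, (c = 1 ∨ c = -1) ∧ 0 < c * u ∧ ∀ v : ℝ, 0 < c * v → |v| = c * v := by
  rcases lt_or_gt_of_ne hu with h | h
  · refine ⟨-1, Or.inr rfl, by linarith [neg_pos.2 h], fun v hv => ?_⟩
    rw [neg_one_mul] at hv ⊢
    exact abs_of_neg (by linarith)
  · refine ⟨1, Or.inl rfl, by linarith, fun v hv => ?_⟩
    rw [one_mul] at hv ⊢
    exact abs_of_pos hv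

lemma abs_mid_lt (ymin ymax z : ℝ) (h1 : ymin < z) (h2 : z < ymax) :
    |z - (ymin + ymax) / 2| < (ymax - ymin) / 2 :=
  abs_lt.2 ⟨by linarith, by linarith⟩

lemma not_c1 {ymin ymax : ℝ} {z : ℝ × ℝ} (h1 : ymin < z.1) (h2 : z.1 < ymax) :
    ¬(z.1 ≤ ymin ∨ ymax ≤ z.1) := by push_neg; exact ⟨h1, h2⟩

lemma branchA (b ymin ymax : ℝ) (y : ℝ × ℝ) (h1 : ymin < y.1) (h2 : y.1 < ymax)
    (hA : |y.2| < r0 b ymin ymax y.1) : DifferentiableAt ℝ (fa b ymin ymax) y := by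
  have hev : fa b ymin ymax =ᶠ[nhds y] fun z => (1/2) * (z.1^2 + z.2^2) := by
    have e1 : ∀ᶠ z in nhds y, ymin < z.1 := ev_lt continuous_const continuous_fst h1
    have e2 : ∀ᶠ z in nhds y, z.1 < ymax := ev_lt continuous_fst continuous_const h2
    have e3 : ∀ᶠ z in nhds y,
        |z.2| < Real.sqrt b * ((ymax - ymin) / 2 - |z.1 - (ymin + ymax) / 2|) := by
      refine ev_lt (by fun_prop) (by fun_prop) ?_
      rwa [strip_r0 b ymin ymax y.1 h1.le h2.le] at hA
    filter_upwards [e1, e2, e3] with z hz1 hz2 hz3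
    have hz3' : |z.2| < r0 b ymin ymax z.1 := by
      rwa [strip_r0 b ymin ymax z.1 hz1.le hz2.le]
    simp only [fa]
    rw [if_neg (not_c1 hz1 hz2), if_pos hz3']
  exact DifferentiableAt.congr_of_eventuallyEq (by fun_prop) hev

lemma branchB (b ymin ymax : ℝ) (hb : 0 < b) (y : ℝ × ℝ)
    (h1 : ymin < y.1) (h2 : y.1 < ymax)
    (hA : r0 b ymin ymax y.1 ≤ |y.2|)
    (hB : |y.2| < ((b+1)/Real.sqrt b) * ((ymax - ymin)/2) - r0 b ymin ymax y.1 / b) :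
    DifferentiableAt ℝ (fa b ymin ymax) y := by
  have hsb : 0 < Real.sqrt b := Real.sqrt_pos.2 hb
  have hw : |y.1 - (ymin+ymax)/2| < (ymax - ymin)/2 := abs_mid_lt ymin ymax y.1 h1 h2
  have hr0eq : r0 b ymin ymax y.1
      = Real.sqrt b * ((ymax-ymin)/2 - |y.1 - (ymin+ymax)/2|) := strip_r0 _ _ _ _ h1.le h2.le
  have hr0pos : 0 < r0 b ymin ymax y.1 := by
    rw [hr0eq]
    have h0 : 0 < (ymax-ymin)/2 - |y.1-(ymin+ymax)/2| := by linarith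
    positivity
  have hy2ne : y.2 ≠ 0 := by
    intro h; rw [h] at hA; simp at hA; linarith
  have hmne : y.1 - (ymin+ymax)/2 ≠ 0 := by
    intro h
    have h0 : |y.1 - (ymin+ymax)/2| = 0 := by rw [h]; simp
    have hSe := Sexpr_eq b ymin ymax hb
    rw [hr0eq, h0, hSe] at hB
    rw [hr0eq, h0] at hA
    simp only [sub_zero] at hA hB
    linarith
  obtain ⟨σ, hσc, hσpos, hσabs⟩ := sign_abs hy2ne
  obtain ⟨τ, hτc, hτpos, hτabs⟩ := sign_abs hmne
  have hΦ : DifferentiableAt ℝ (fun z : ℝ×ℝ => (1/2)*(z.1^2+z.2^2)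
      - (1/(2*(b+1))) * max (σ*z.2 - Real.sqrt b*((ymax-ymin)/2 - τ*(z.1 - (ymin+ymax)/2))) 0 ^2) y := by
    refine DifferentiableAt.sub (by fun_prop) ?_
    exact DifferentiableAt.const_mul (diffAt_sq_max (by fun_prop)) _
  refine DifferentiableAt.congr_of_eventuallyEq hΦ ?_
  have e1 : ∀ᶠ z in nhds y, ymin < z.1 := ev_lt continuous_const continuous_fst h1
  have e2 : ∀ᶠ z in nhds y, z.1 < ymax := ev_lt continuous_fst continuous_const h2
  have e3 : ∀ᶠ z in nhds y, 0 < σ * z.2 := ev_lt continuous_const (by fun_prop) hσpos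
  have e4 : ∀ᶠ z in nhds y, 0 < τ * (z.1 - (ymin+ymax)/2) := ev_lt continuous_const (by fun_prop) hτpos
  have e5 : ∀ᶠ z in nhds y, |z.2| < ((b+1)/Real.sqrt b) * ((ymax-ymin)/2)
      - Real.sqrt b*((ymax-ymin)/2 - τ*(z.1 - (ymin+ymax)/2))/b := by
    refine ev_lt (by fun_prop) (by fun_prop) ?_
    rw [← hτabs _ hτpos, ← hr0eq]
    exact hB
  filter_upwards [e1, e2, e3, e4, e5] with z hz1 hz2 hz3 hz4 hz5
  have habs2 : |z.2| = σ * z.2 := hσabs _ hz3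
  have habs1 : |z.1 - (ymin+ymax)/2| = τ * (z.1 - (ymin+ymax)/2) := hτabs _ hz4
  have hr0z : r0 b ymin ymax z.1 = Real.sqrt b*((ymax-ymin)/2 - τ*(z.1-(ymin+ymax)/2)) := by
    rw [strip_r0 _ _ _ _ hz1.le hz2.le, habs1]
  simp only [fa]
  rw [if_neg (not_c1 hz1 hz2)]
  by_cases hc2 : |z.2| < r0 b ymin ymax z.1
  · rw [if_pos hc2]
    rw [hr0z, habs2] at hc2
    rw [max_eq_right (by linarith)]
    ring
  · rw [if_neg hc2, if_pos (by rw [hr0z]; exact hz5)]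
    rw [hr0z] at hc2 ⊢
    rw [habs2] at hc2 ⊢
    push_neg at hc2
    rw [max_eq_left (by linarith)]
    ring

lemma branchD (b ymin ymax : ℝ) (hb : 0 < b) (y : ℝ × ℝ)
    (h1 : ymin < y.1) (h2 : y.1 < ymax)
    (hmne : y.1 - (ymin+ymax)/2 ≠ 0)
    (hgt : r0 b ymin ymax y.1 < |y.2|)
    (hltS : |y.2| < ((b+1)/Real.sqrt b) * ((ymax - ymin)/2)) :
    DifferentiableAt ℝ (fa b ymin ymax) y := by
  have hsb : 0 < Real.sqrt b := Real.sqrt_pos.2 hb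
  have hw : |y.1 - (ymin+ymax)/2| < (ymax - ymin)/2 := abs_mid_lt ymin ymax y.1 h1 h2
  have hr0eq : r0 b ymin ymax y.1
      = Real.sqrt b * ((ymax-ymin)/2 - |y.1 - (ymin+ymax)/2|) := strip_r0 _ _ _ _ h1.le h2.le
  have hr0pos : 0 < r0 b ymin ymax y.1 := by
    rw [hr0eq]
    have h0 : 0 < (ymax-ymin)/2 - |y.1-(ymin+ymax)/2| := by linarith
    positivity
  have hy2ne : y.2 ≠ 0 := by
    intro h; rw [h] at hgt; simp at hgt; linarith
  obtain ⟨σ, hσc, hσpos, hσabs⟩ := sign_abs hy2ne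
  obtain ⟨τ, hτc, hτpos, hτabs⟩ := sign_abs hmne
  have hΦ : DifferentiableAt ℝ (fun z : ℝ×ℝ => (1/2)*(z.1^2+z.2^2)
      - (1/(2*(b+1))) * (σ*z.2 - Real.sqrt b*((ymax-ymin)/2 - τ*(z.1 - (ymin+ymax)/2)))^2
      - (b/(2*(b+1))) * max (σ*z.2 - (((b+1)/Real.sqrt b) * ((ymax-ymin)/2)
          - Real.sqrt b*((ymax-ymin)/2 - τ*(z.1 - (ymin+ymax)/2))/b)) 0 ^2) y := by
    refine DifferentiableAt.sub (DifferentiableAt.sub (by fun_prop) (by fun_prop)) ?_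
    exact DifferentiableAt.const_mul (diffAt_sq_max (by fun_prop)) _
  refine DifferentiableAt.congr_of_eventuallyEq hΦ ?_
  have e1 : ∀ᶠ z in nhds y, ymin < z.1 := ev_lt continuous_const continuous_fst h1
  have e2 : ∀ᶠ z in nhds y, z.1 < ymax := ev_lt continuous_fst continuous_const h2
  have e3 : ∀ᶠ z in nhds y, 0 < σ * z.2 := ev_lt continuous_const (by fun_prop) hσpos
  have e4 : ∀ᶠ z in nhds y, 0 < τ * (z.1 - (ymin+ymax)/2) := ev_lt continuous_const (by fun_prop) hτpos
  have e5 : ∀ᶠ z in nhds y,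
      Real.sqrt b*((ymax-ymin)/2 - τ*(z.1 - (ymin+ymax)/2)) < σ*z.2 := by
    refine ev_lt (by fun_prop) (by fun_prop) ?_
    rw [← hτabs _ hτpos, ← hσabs _ hσpos, ← hr0eq]
    exact hgt
  have e6 : ∀ᶠ z in nhds y, σ*z.2 < ((b+1)/Real.sqrt b) * ((ymax-ymin)/2) := by
    refine ev_lt (by fun_prop) continuous_const ?_
    rw [← hσabs _ hσpos]
    exact hltS
  filter_upwards [e1, e2, e3, e4, e5, e6] with z hz1 hz2 hz3 hz4 hz5 hz6
  have habs2 : |z.2| = σ * z.2 := hσabs _ hz3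
  have habs1 : |z.1 - (ymin+ymax)/2| = τ * (z.1 - (ymin+ymax)/2) := hτabs _ hz4
  have hr0z : r0 b ymin ymax z.1 = Real.sqrt b*((ymax-ymin)/2 - τ*(z.1-(ymin+ymax)/2)) := by
    rw [strip_r0 _ _ _ _ hz1.le hz2.le, habs1]
  have hgtz : r0 b ymin ymax z.1 < |z.2| := by rw [hr0z, habs2]; exact hz5
  simp only [fa]
  rw [if_neg (not_c1 hz1 hz2), if_neg (not_lt.2 hgtz.le)]
  by_cases hc3 : |z.2| < ((b+1)/Real.sqrt b) * ((ymax-ymin)/2) - r0 b ymin ymax z.1 / b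
  · rw [if_pos hc3]
    rw [hr0z, habs2] at hc3 ⊢
    rw [max_eq_right (by linarith)]
    ring
  · rw [if_neg hc3, if_pos (by rw [habs2]; exact hz6.le)]
    rw [hr0z] at hc3 ⊢
    rw [habs2] at hc3 ⊢
    push_neg at hc3
    rw [max_eq_left (by linarith)]
    ring

lemma branchC (b ymin ymax : ℝ) (hb : 0 < b) (hy : ymin < ymax) (y : ℝ × ℝ)
    (h1 : ymin < y.1) (h2 : y.1 < ymax)
    (hgt : ((b+1)/Real.sqrt b) * ((ymax - ymin)/2) - r0 b ymin ymax y.1 / b < |y.2|) :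
    DifferentiableAt ℝ (fa b ymin ymax) y := by
  have hsb : 0 < Real.sqrt b := Real.sqrt_pos.2 hb
  have hsb2 : Real.sqrt b ^ 2 = b := Real.sq_sqrt hb.le
  have hbne : b ≠ 0 := ne_of_gt hb
  have hb1ne : b + 1 ≠ 0 := by positivity
  have hs : 0 < (ymax - ymin)/2 := by linarith
  have hSe := Sexpr_eq b ymin ymax hb
  have hSid : Real.sqrt b * (((b+1)/Real.sqrt b) * ((ymax-ymin)/2)) = (b+1)*((ymax-ymin)/2) := by
    field_simp
  have hr0le : ∀ u : ℝ, ymin < u → u < ymax →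
      r0 b ymin ymax u ≤ Real.sqrt b * ((ymax-ymin)/2) := by
    intro u hu1 hu2
    rw [strip_r0 _ _ _ _ hu1.le hu2.le]
    nlinarith [abs_nonneg (u - (ymin+ymax)/2)]
  have hr0T : ∀ u : ℝ, ymin < u → u < ymax →
      r0 b ymin ymax u ≤ ((b+1)/Real.sqrt b) * ((ymax-ymin)/2) - r0 b ymin ymax u / b := by
    intro u hu1 hu2
    have h3 := hr0le u hu1 hu2
    have h4 : 0 ≤ (Real.sqrt b * ((ymax-ymin)/2) - r0 b ymin ymax u)/b :=
      div_nonneg (by linarith) hb.le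
    rw [hSe]
    have h5 : (Real.sqrt b * ((ymax-ymin)/2) - r0 b ymin ymax u)/b
        = Real.sqrt b * ((ymax-ymin)/2)/b - r0 b ymin ymax u/b := by ring
    rw [h5] at h4
    linarith
  have hy2pos : 0 < |y.2| := by
    have h3 := hr0le y.1 h1 h2
    have h4 := hr0T y.1 h1 h2
    have h5 : 0 < Real.sqrt b * ((ymax-ymin)/2) := by positivity
    have hr0nn : 0 ≤ r0 b ymin ymax y.1 := by
      rw [strip_r0 _ _ _ _ h1.le h2.le]
      have := abs_mid_lt ymin ymax y.1 h1 h2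
      nlinarith
    linarith
  have hy2ne : y.2 ≠ 0 := by
    intro h; rw [h] at hy2pos; simp at hy2pos
  obtain ⟨σ, hσc, hσpos, hσabs⟩ := sign_abs hy2ne
  have hσ2 : σ^2 = 1 := by rcases hσc with rfl | rfl <;> norm_num
  have hΦ : DifferentiableAt ℝ (fun z : ℝ×ℝ => (1/2)*z.1^2 + (b/(2*(b+1)))*z.2^2
      + (1/2)*(z.1-ymin)*(ymax-z.1)
      - (b/(2*(b+1))) * max (((b+1)/Real.sqrt b) * ((ymax-ymin)/2) - σ*z.2) 0 ^2) y := by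
    refine DifferentiableAt.sub (by fun_prop) ?_
    exact DifferentiableAt.const_mul (diffAt_sq_max (by fun_prop)) _
  refine DifferentiableAt.congr_of_eventuallyEq hΦ ?_
  have e1 : ∀ᶠ z in nhds y, ymin < z.1 := ev_lt continuous_const continuous_fst h1
  have e2 : ∀ᶠ z in nhds y, z.1 < ymax := ev_lt continuous_fst continuous_const h2
  have e3 : ∀ᶠ z in nhds y, 0 < σ * z.2 := ev_lt continuous_const (by fun_prop) hσpos
  have e5 : ∀ᶠ z in nhds y, ((b+1)/Real.sqrt b) * ((ymax-ymin)/2)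
      - Real.sqrt b * ((ymax-ymin)/2 - |z.1 - (ymin+ymax)/2|)/b < σ*z.2 := by
    refine ev_lt (by fun_prop) (by fun_prop) ?_
    rw [← hσabs _ hσpos, ← strip_r0 b ymin ymax y.1 h1.le h2.le]
    exact hgt
  filter_upwards [e1, e2, e3, e5] with z hz1 hz2 hz3 hz5
  have habs2 : |z.2| = σ * z.2 := hσabs _ hz3
  have hr0z : r0 b ymin ymax z.1
      = Real.sqrt b * ((ymax-ymin)/2 - |z.1-(ymin+ymax)/2|) := strip_r0 _ _ _ _ hz1.le hz2.le
  have hTz : ((b+1)/Real.sqrt b) * ((ymax-ymin)/2) - r0 b ymin ymax z.1 / b < |z.2| := by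
    rw [hr0z, habs2]; exact hz5
  have hc2 : ¬ (|z.2| < r0 b ymin ymax z.1) := by
    have := hr0T z.1 hz1 hz2
    push_neg
    linarith
  simp only [fa]
  rw [if_neg (not_c1 hz1 hz2), if_neg hc2, if_neg (not_lt.2 hTz.le)]
  by_cases hc4 : |z.2| ≤ ((b+1)/Real.sqrt b) * ((ymax-ymin)/2)
  · rw [if_pos hc4]
    rw [habs2] at hc4
    rw [hr0z, habs2]
    rw [max_eq_left (by linarith)]
    linear_combination (region4_id b (Real.sqrt b) z.1 (σ*z.2) ymin ymax
      (|z.1 - (ymin+ymax)/2|) (((b+1)/Real.sqrt b) * ((ymax-ymin)/2))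
      hbne hb1ne hsb2 (sq_abs _) hSid) + (z.2^2*(b/(2*(b+1)) - 1/2)) * hσ2
  · rw [if_neg hc4]
    push_neg at hc4
    rw [habs2] at hc4
    rw [max_eq_right (by linarith)]
    ring

set_option maxHeartbeats 1000000 in
lemma corner (b ymin ymax : ℝ) (hb : 0 < b) (hy : ymin < ymax) (y : ℝ × ℝ)
    (h1 : ymin < y.1) (h2 : y.1 < ymax)
    (hm : y.1 = (ymin+ymax)/2)
    (ht : |y.2| = Real.sqrt b * ((ymax-ymin)/2)) :
    DifferentiableAt ℝ (fa b ymin ymax) y := by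
  have hsb : 0 < Real.sqrt b := Real.sqrt_pos.2 hb
  have hs : 0 < (ymax-ymin)/2 := by linarith
  have hSe := Sexpr_eq b ymin ymax hb
  have hb1 : (0:ℝ) < b + 1 := by linarith
  have hQd : DifferentiableAt ℝ (fun z : ℝ×ℝ => (1/2)*(z.1^2+z.2^2)) y := by fun_prop
  obtain ⟨L, hL⟩ : ∃ L, HasFDerivAt (fun z : ℝ×ℝ => (1/2)*(z.1^2+z.2^2)) L y :=
    ⟨_, hQd.hasFDerivAt⟩
  suffices hkey : HasFDerivAt (fa b ymin ymax) L y from hkey.differentiableAt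
  have hr0y : r0 b ymin ymax y.1 = Real.sqrt b*((ymax-ymin)/2) := by
    rw [strip_r0 _ _ _ _ h1.le h2.le, hm]; simp
  have hfay : fa b ymin ymax y = (1/2)*(y.1^2+y.2^2) := by
    simp only [fa]
    rw [if_neg (not_c1 h1 h2)]
    rw [if_neg (by push_neg; rw [hr0y, ht])]
    rw [if_neg (by push_neg; rw [hr0y, ht, hSe]; linarith)]
    rw [if_pos (by
      rw [ht, hSe]
      have h0 : 0 ≤ Real.sqrt b*((ymax-ymin)/2)/b := by positivity
      linarith)]
    rw [hr0y, ht, hSe]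
    ring
  have hsub : HasFDerivAt (fun z : ℝ×ℝ => fa b ymin ymax z - (1/2)*(z.1^2+z.2^2))
      (0 : ℝ×ℝ →L[ℝ] ℝ) y := by
    rw [hasFDerivAt_iff_isLittleO]
    have hzero : fa b ymin ymax y - (1/2)*(y.1^2+y.2^2) = 0 := by rw [hfay]; ring
    simp only [ContinuousLinearMap.zero_apply, sub_zero, hzero]
    rw [isLittleO_iff]
    intro c hc
    set C : ℝ := (1+Real.sqrt b)^2 + (1+Real.sqrt b/b)^2 with hCdef
    have hC : 0 < C := by rw [hCdef]; positivity
    clear_value C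
    have e1 : ∀ᶠ z in nhds y, ymin < z.1 := ev_lt continuous_const continuous_fst h1
    have e2 : ∀ᶠ z in nhds y, z.1 < ymax := ev_lt continuous_fst continuous_const h2
    have e3 : ∀ᶠ z in nhds y, |z.2| < ((b+1)/Real.sqrt b) * ((ymax-ymin)/2) := by
      refine ev_lt (by fun_prop) continuous_const ?_
      rw [ht, hSe]
      have h0 : 0 < Real.sqrt b*((ymax-ymin)/2)/b := by positivity
      linarith
    have e4 : ∀ᶠ z in nhds y, dist z y < c/C := by
      filter_upwards [Metric.ball_mem_nhds y (show (0:ℝ) < c/C by positivity)] with z hz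
      exact Metric.mem_ball.1 hz
    filter_upwards [e1, e2, e3, e4] with z hz1 hz2 hz3 hz4
    have hr0z : r0 b ymin ymax z.1
        = Real.sqrt b*((ymax-ymin)/2 - |z.1-(ymin+ymax)/2|) := strip_r0 _ _ _ _ hz1.le hz2.le
    have hn1 : |z.1 - (ymin+ymax)/2| ≤ ‖z - y‖ := by
      have hfst : z.1 - (ymin+ymax)/2 = (z - y).1 := by
        have : (z - y).1 = z.1 - y.1 := rfl
        rw [this, hm]
      rw [hfst]
      simpa [Real.norm_eq_abs] using norm_fst_le (z - y)
    have hn2 : |(|z.2| - Real.sqrt b*((ymax-ymin)/2))| ≤ ‖z - y‖ := by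
      rw [← ht]
      refine (abs_abs_sub_abs_le_abs_sub _ _).trans ?_
      have hsnd : z.2 - y.2 = (z - y).2 := rfl
      rw [hsnd]
      simpa [Real.norm_eq_abs] using norm_snd_le (z - y)
    have hB1 : (|z.2| - r0 b ymin ymax z.1)^2 ≤ (1+Real.sqrt b)^2 * ‖z-y‖^2 := by
      rw [hr0z]
      have habs' : |(|z.2| - Real.sqrt b*((ymax-ymin)/2 - |z.1-(ymin+ymax)/2|))|
          ≤ (1+Real.sqrt b) * ‖z-y‖ := by
        have expand : |z.2| - Real.sqrt b*((ymax-ymin)/2 - |z.1-(ymin+ymax)/2|)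
            = (|z.2| - Real.sqrt b*((ymax-ymin)/2)) + Real.sqrt b * |z.1-(ymin+ymax)/2| := by
          ring
        rw [expand]
        refine (abs_add_le _ _).trans ?_
        have i2 : abs (Real.sqrt b * |z.1-(ymin+ymax)/2|) = Real.sqrt b * |z.1-(ymin+ymax)/2| :=
          abs_of_nonneg (by positivity)
        rw [i2]
        have i3 := mul_le_mul_of_nonneg_left hn1 hsb.le
        have : (1+Real.sqrt b) * ‖z-y‖ = ‖z-y‖ + Real.sqrt b * ‖z-y‖ := by ring
        rw [this]
        exact add_le_add hn2 i3
      have hab := abs_le.1 habs'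
      have h2 := sq_le_sq' hab.1 hab.2
      have h3 : ((1+Real.sqrt b)*‖z-y‖)^2 = (1+Real.sqrt b)^2*‖z-y‖^2 := by ring
      linarith
    have hB2 : (|z.2| - (((b+1)/Real.sqrt b)*((ymax-ymin)/2) - r0 b ymin ymax z.1/b))^2
        ≤ (1+Real.sqrt b/b)^2 * ‖z-y‖^2 := by
      rw [hr0z, hSe]
      have habs' : |(|z.2| - (Real.sqrt b*((ymax-ymin)/2) + Real.sqrt b*((ymax-ymin)/2)/b
          - Real.sqrt b*((ymax-ymin)/2 - |z.1-(ymin+ymax)/2|)/b))|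
          ≤ (1+Real.sqrt b/b) * ‖z-y‖ := by
        have expand : |z.2| - (Real.sqrt b*((ymax-ymin)/2) + Real.sqrt b*((ymax-ymin)/2)/b
            - Real.sqrt b*((ymax-ymin)/2 - |z.1-(ymin+ymax)/2|)/b)
            = (|z.2| - Real.sqrt b*((ymax-ymin)/2)) + (-((Real.sqrt b/b) * |z.1-(ymin+ymax)/2|)) := by
          ring
        rw [expand]
        refine (abs_add_le _ _).trans ?_
        have i2 : |(-((Real.sqrt b/b) * |z.1-(ymin+ymax)/2|))| = (Real.sqrt b/b) * |z.1-(ymin+ymax)/2| := by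
          rw [abs_neg]; exact abs_of_nonneg (by positivity)
        rw [i2]
        have i3 := mul_le_mul_of_nonneg_left hn1 (by positivity : (0:ℝ) ≤ Real.sqrt b/b)
        have : (1+Real.sqrt b/b) * ‖z-y‖ = ‖z-y‖ + (Real.sqrt b/b) * ‖z-y‖ := by ring
        rw [this]
        exact add_le_add hn2 i3
      have hab := abs_le.1 habs'
      have h2 := sq_le_sq' hab.1 hab.2
      have h3 : ((1+Real.sqrt b/b)*‖z-y‖)^2 = (1+Real.sqrt b/b)^2*‖z-y‖^2 := by ring
      linarith
    have hfd : |fa b ymin ymax z - (1/2)*(z.1^2+z.2^2)|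
        ≤ (|z.2| - r0 b ymin ymax z.1)^2
          + (|z.2| - (((b+1)/Real.sqrt b)*((ymax-ymin)/2) - r0 b ymin ymax z.1/b))^2 := by
      simp only [fa]
      rw [if_neg (not_c1 hz1 hz2)]
      by_cases hc2 : |z.2| < r0 b ymin ymax z.1
      · rw [if_pos hc2]
        have h0 : (1/2) * (z.1 ^ 2 + z.2 ^ 2) - (1/2)*(z.1^2+z.2^2) = 0 := by ring
        rw [h0, abs_zero]
        positivity
      by_cases hc3 : |z.2| < ((b+1)/Real.sqrt b)*((ymax-ymin)/2) - r0 b ymin ymax z.1/b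
      · rw [if_neg hc2, if_pos hc3]
        have h0 : (1/2) * (z.1 ^ 2 + z.2 ^ 2) - (|z.2| - r0 b ymin ymax z.1) ^ 2 / (2 * (b + 1))
            - (1/2)*(z.1^2+z.2^2) = -((|z.2| - r0 b ymin ymax z.1) ^ 2 / (2 * (b + 1))) := by ring
        rw [h0, abs_neg, abs_of_nonneg (by positivity)]
        have d1 : (|z.2| - r0 b ymin ymax z.1) ^ 2 / (2 * (b + 1))
            ≤ (|z.2| - r0 b ymin ymax z.1) ^ 2 := div_le_self (sq_nonneg _) (by linarith)
        linarith [sq_nonneg (|z.2| - (((b+1)/Real.sqrt b)*((ymax-ymin)/2) - r0 b ymin ymax z.1/b))]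
      · rw [if_neg hc2, if_neg hc3, if_pos hz3.le]
        have h0 : (1/2) * (z.1 ^ 2 + z.2 ^ 2) - (|z.2| - r0 b ymin ymax z.1) ^ 2 / (2 * (b + 1))
            - (b / (2 * (b + 1))) * (|z.2| - ((b+1)/Real.sqrt b)*((ymax-ymin)/2) + r0 b ymin ymax z.1/b) ^ 2
            - (1/2)*(z.1^2+z.2^2)
            = -((|z.2| - r0 b ymin ymax z.1) ^ 2 / (2 * (b + 1))
              + (b / (2 * (b + 1))) * (|z.2| - ((b+1)/Real.sqrt b)*((ymax-ymin)/2) + r0 b ymin ymax z.1/b) ^ 2) := by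
          ring
        rw [h0, abs_neg, abs_of_nonneg (by positivity)]
        have d1 : (|z.2| - r0 b ymin ymax z.1) ^ 2 / (2 * (b + 1))
            ≤ (|z.2| - r0 b ymin ymax z.1) ^ 2 := div_le_self (sq_nonneg _) (by linarith)
        have d2 : b / (2 * (b + 1)) ≤ 1 := by
          rw [div_le_one (by linarith)]; linarith
        have d3 : (b / (2 * (b + 1))) * (|z.2| - ((b+1)/Real.sqrt b)*((ymax-ymin)/2) + r0 b ymin ymax z.1/b) ^ 2
            ≤ (|z.2| - ((b+1)/Real.sqrt b)*((ymax-ymin)/2) + r0 b ymin ymax z.1/b) ^ 2 := by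
          exact mul_le_of_le_one_left (sq_nonneg _) d2
        have d4 : (|z.2| - ((b+1)/Real.sqrt b)*((ymax-ymin)/2) + r0 b ymin ymax z.1/b) ^ 2
            = (|z.2| - (((b+1)/Real.sqrt b)*((ymax-ymin)/2) - r0 b ymin ymax z.1/b)) ^ 2 := by
          ring
        rw [d4] at d3
        linarith
    have hC2 : |fa b ymin ymax z - (1/2)*(z.1^2+z.2^2)| ≤ C * ‖z-y‖^2 := by
      rw [hCdef]
      calc |fa b ymin ymax z - (1/2)*(z.1^2+z.2^2)|
          ≤ (|z.2| - r0 b ymin ymax z.1)^2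
            + (|z.2| - (((b+1)/Real.sqrt b)*((ymax-ymin)/2) - r0 b ymin ymax z.1/b))^2 := hfd
        _ ≤ (1+Real.sqrt b)^2 * ‖z-y‖^2 + (1+Real.sqrt b/b)^2 * ‖z-y‖^2 := add_le_add hB1 hB2
        _ = ((1+Real.sqrt b)^2 + (1+Real.sqrt b/b)^2) * ‖z-y‖^2 := by ring
    have hlt : ‖z - y‖ * C < c := by
      rw [dist_eq_norm] at hz4
      exact (lt_div_iff₀ hC).1 hz4
    rw [Real.norm_eq_abs]
    have h5 : 0 ≤ ‖z-y‖ * (c - ‖z-y‖*C) := mul_nonneg (norm_nonneg _) (by linarith)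
    have h6 : ‖z-y‖*(c - ‖z-y‖*C) = c*‖z-y‖ - C*‖z-y‖^2 := by ring
    rw [h6] at h5
    linarith
  have hadd := hsub.add hL
  rw [zero_add] at hadd
  exact hadd.congr_of_eventuallyEq (by filter_upwards with z using by simp only [Pi.add_apply]; ring)

theorem stmt_3 (b ymin ymax : ℝ) (hb : 0 < b) (hy : ymin < ymax)
    (y : ℝ × ℝ) (h1 : y.1 ≠ ymin) (h2 : y.1 ≠ ymax) :
    DifferentiableAt ℝ (fa b ymin ymax) y := by
  rcases lt_trichotomy y.1 ymin with hlt | heq | hgt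
  · have hev : fa b ymin ymax =ᶠ[nhds y]
        fun z => (1 / 2) * z.1 ^ 2 + (b / (2 * (b + 1))) * z.2 ^ 2 := by
      filter_upwards [ev_lt continuous_fst continuous_const hlt] with z hz
      simp only [fa]
      rw [if_pos (Or.inl hz.le)]
    exact DifferentiableAt.congr_of_eventuallyEq (by fun_prop) hev
  · exact absurd heq h1
  rcases lt_trichotomy y.1 ymax with hlt2 | heq2 | hgt2
  · -- inside the strip
    have hsb : 0 < Real.sqrt b := Real.sqrt_pos.2 hb
    have hs : 0 < (ymax - ymin)/2 := by linarith
    have hSe := Sexpr_eq b ymin ymax hb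
    have hr0eq : r0 b ymin ymax y.1
        = Real.sqrt b * ((ymax-ymin)/2 - |y.1 - (ymin+ymax)/2|) := strip_r0 _ _ _ _ hgt.le hlt2.le
    have hwlt : |y.1 - (ymin+ymax)/2| < (ymax-ymin)/2 := abs_mid_lt ymin ymax y.1 hgt hlt2
    have hr0pos : 0 < r0 b ymin ymax y.1 := by
      rw [hr0eq]
      have h0 : 0 < (ymax-ymin)/2 - |y.1-(ymin+ymax)/2| := by linarith
      positivity
    by_cases hA : |y.2| < r0 b ymin ymax y.1
    · exact branchA b ymin ymax y hgt hlt2 hA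
    push_neg at hA
    by_cases hB : |y.2| < ((b+1)/Real.sqrt b) * ((ymax - ymin)/2) - r0 b ymin ymax y.1 / b
    · exact branchB b ymin ymax hb y hgt hlt2 hA hB
    push_neg at hB
    rcases lt_or_eq_of_le hB with hC | hCeq
    · exact branchC b ymin ymax hb hy y hgt hlt2 hC
    · by_cases hm : y.1 - (ymin+ymax)/2 = 0
      · -- corner point
        have hm' : y.1 = (ymin+ymax)/2 := by linarith
        have hm0 : |y.1 - (ymin+ymax)/2| = 0 := by rw [hm]; exact abs_zero
        have hexp : Real.sqrt b*((ymax-ymin)/2 - 0)/b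
            = Real.sqrt b*((ymax-ymin)/2)/b := by ring
        have ht : |y.2| = Real.sqrt b * ((ymax-ymin)/2) := by
          rw [← hCeq, hr0eq, hm0, hSe, hexp]
          ring
        exact corner b ymin ymax hb hy y hgt hlt2 hm' ht
      · -- branch D
        have hwpos : 0 < |y.1 - (ymin+ymax)/2| := abs_pos.2 hm
        have hp1 : 0 < Real.sqrt b * |y.1 - (ymin+ymax)/2| := by positivity
        have hp2 : 0 < Real.sqrt b * |y.1 - (ymin+ymax)/2| / b := by positivity
        have hexp : Real.sqrt b*((ymax-ymin)/2 - |y.1 - (ymin+ymax)/2|)/b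
            = Real.sqrt b*((ymax-ymin)/2)/b - Real.sqrt b*|y.1 - (ymin+ymax)/2|/b := by ring
        have hexp2 : Real.sqrt b*((ymax-ymin)/2 - |y.1 - (ymin+ymax)/2|)
            = Real.sqrt b*((ymax-ymin)/2) - Real.sqrt b*|y.1 - (ymin+ymax)/2| := by ring
        have hgt' : r0 b ymin ymax y.1 < |y.2| := by
          rw [← hCeq, hr0eq, hSe]
          linarith [hexp, hexp2, hp1, hp2]
        have hltS : |y.2| < ((b+1)/Real.sqrt b) * ((ymax - ymin)/2) := by
          rw [← hCeq]
          have h0 : 0 < r0 b ymin ymax y.1 / b := by positivity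
          linarith
        exact branchD b ymin ymax hb y hgt hlt2 hm hgt' hltS
  · exact absurd heq2 h2
  · have hev : fa b ymin ymax =ᶠ[nhds y]
        fun z => (1 / 2) * z.1 ^ 2 + (b / (2 * (b + 1))) * z.2 ^ 2 := by
      filter_upwards [ev_lt continuous_const continuous_fst hgt2] with z hz
      simp only [fa]
      rw [if_pos (Or.inr hz.le)]
    exact DifferentiableAt.congr_of_eventuallyEq (by fun_prop) hev
end

section
/- The function f_a : ℝ² → ℝ is convex. -/
namespace CvAux

/-- The rhombus. -/
noncomputable def K (a ymin ymax : ℝ) : Set (ℝ × ℝ) :=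
  {z | ymin ≤ z.1 ∧ z.1 ≤ ymax ∧ |z.2| ≤ a * ((ymax - ymin) / 2 - |z.1 - (ymin + ymax) / 2|)}

/-- Affine minorant indexed by `z`. -/
noncomputable def lz (y z : ℝ × ℝ) : ℝ := z.1 * y.1 + z.2 * y.2 - (z.1 ^ 2 + z.2 ^ 2) / 2

noncomputable def Phi (a ymin ymax : ℝ) (y : ℝ × ℝ) : ℝ := sSup (lz y '' K a ymin ymax)

noncomputable def LL (a ymin ymax : ℝ) : ℝ := (a ^ 2 + 1) / a * ((ymax - ymin) / 2)

noncomputable def hh (a ymin ymax : ℝ) (y : ℝ × ℝ) : ℝ :=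
  (ymin + ymax) / 2 * y.1 - ymin * ymax / 2 +
    a ^ 2 / (2 * (a ^ 2 + 1)) *
      (2 * LL a ymin ymax * |y.2| - LL a ymin ymax ^ 2 + max (|y.2| - LL a ymin ymax) 0 ^ 2)

noncomputable def gg (a : ℝ) (y : ℝ × ℝ) : ℝ := 1 / 2 * y.1 ^ 2 + a ^ 2 / (2 * (a ^ 2 + 1)) * y.2 ^ 2

noncomputable def FF (a ymin ymax : ℝ) (y : ℝ × ℝ) : ℝ :=
  max (gg a y) (max (Phi a ymin ymax y) (hh a ymin ymax y))

lemma lz_le (y z : ℝ × ℝ) : lz y z ≤ (y.1 ^ 2 + y.2 ^ 2) / 2 := by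
  simp only [lz]; nlinarith [sq_nonneg (y.1 - z.1), sq_nonneg (y.2 - z.2)]

lemma bddA (a ymin ymax : ℝ) (y : ℝ × ℝ) : BddAbove (lz y '' K a ymin ymax) := by
  refine ⟨(y.1 ^ 2 + y.2 ^ 2) / 2, ?_⟩
  rintro v ⟨z, _, rfl⟩
  exact lz_le y z

lemma midK {a ymin ymax : ℝ} (ha : 0 ≤ a) (hy : ymin ≤ ymax) :
    ((ymin + ymax) / 2, (0 : ℝ)) ∈ K a ymin ymax := by
  refine ⟨by linarith, by linarith, ?_⟩
  simp only [sub_self, abs_zero, sub_zero]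
  have : 0 ≤ (ymax - ymin) / 2 := by linarith
  exact mul_nonneg ha this

lemma Phi_cv {a ymin ymax : ℝ} (ha : 0 ≤ a) (hy : ymin ≤ ymax) :
    ConvexOn ℝ Set.univ (Phi a ymin ymax) := by
  refine ⟨convex_univ, fun x _ w _ p q hp hq hpq => ?_⟩
  have hne : (lz (p • x + q • w) '' K a ymin ymax).Nonempty :=
    (Set.Nonempty.image _ ⟨_, midK ha hy⟩)
  refine csSup_le hne ?_
  rintro v ⟨z, hz, rfl⟩
  have hkey : lz (p • x + q • w) z = p * lz x z + q * lz w z := by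
    simp only [lz, Prod.fst_add, Prod.snd_add, Prod.smul_fst, Prod.smul_snd, smul_eq_mul]
    linear_combination ((z.1 ^ 2 + z.2 ^ 2) / 2) * hpq
  rw [hkey]
  have h1 : lz x z ≤ Phi a ymin ymax x := le_csSup (bddA a ymin ymax x) ⟨z, hz, rfl⟩
  have h2 : lz w z ≤ Phi a ymin ymax w := le_csSup (bddA a ymin ymax w) ⟨z, hz, rfl⟩
  have := add_le_add (mul_le_mul_of_nonneg_left h1 hp) (mul_le_mul_of_nonneg_left h2 hq)
  simpa [smul_eq_mul] using this

lemma gg_cv (a : ℝ) : ConvexOn ℝ Set.univ (gg a) := by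
  refine ⟨convex_univ, fun x _ w _ p q hp hq hpq => ?_⟩
  have hβ : (0:ℝ) ≤ a ^ 2 / (2 * (a ^ 2 + 1)) := by positivity
  have hq' : q = 1 - p := by linarith
  subst hq'
  simp only [gg, Prod.fst_add, Prod.snd_add, Prod.smul_fst, Prod.smul_snd, smul_eq_mul]
  have i1 : (p * x.1 + (1 - p) * w.1) ^ 2 ≤ p * x.1 ^ 2 + (1 - p) * w.1 ^ 2 := by
    nlinarith [mul_nonneg (mul_nonneg hp hq) (sq_nonneg (x.1 - w.1))]
  have i2 : (p * x.2 + (1 - p) * w.2) ^ 2 ≤ p * x.2 ^ 2 + (1 - p) * w.2 ^ 2 := by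
    nlinarith [mul_nonneg (mul_nonneg hp hq) (sq_nonneg (x.2 - w.2))]
  have h12 : (0:ℝ) ≤ 1 / 2 := by norm_num
  have := add_le_add (mul_le_mul_of_nonneg_left i1 h12) (mul_le_mul_of_nonneg_left i2 hβ)
  nlinarith [this]

lemma hh_cv {a ymin ymax : ℝ} (ha : 0 < a) (hy : ymin ≤ ymax) :
    ConvexOn ℝ Set.univ (hh a ymin ymax) := by
  have hs2 : 0 ≤ (ymax - ymin) / 2 := by linarith
  have hL0 : 0 ≤ LL a ymin ymax := by
    unfold LL; exact mul_nonneg (by positivity) hs2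
  set Lv := LL a ymin ymax with hLv
  refine ⟨convex_univ, fun x _ w _ p q hp hq hpq => ?_⟩
  have hβ : (0:ℝ) ≤ a ^ 2 / (2 * (a ^ 2 + 1)) := by positivity
  have hq' : q = 1 - p := by linarith
  subst hq'
  simp only [hh, ← hLv, Prod.fst_add, Prod.snd_add, Prod.smul_fst, Prod.smul_snd, smul_eq_mul]
  set Mx := max (|x.2| - Lv) 0 with hMx
  set My := max (|w.2| - Lv) 0 with hMy
  have hMx0 : 0 ≤ Mx := le_max_right _ _
  have hMy0 : 0 ≤ My := le_max_right _ _
  have habs : |p * x.2 + (1 - p) * w.2| ≤ p * |x.2| + (1 - p) * |w.2| := by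
    calc |p * x.2 + (1 - p) * w.2| ≤ |p * x.2| + |(1 - p) * w.2| := abs_add_le _ _
    _ = p * |x.2| + (1 - p) * |w.2| := by
        rw [abs_mul, abs_mul, abs_of_nonneg hp, abs_of_nonneg hq]
  have hM : max (|p * x.2 + (1 - p) * w.2| - Lv) 0 ≤ p * Mx + (1 - p) * My := by
    apply max_le
    · have e1 : p * (|x.2| - Lv) ≤ p * Mx := mul_le_mul_of_nonneg_left (le_max_left _ _) hp
      have e2 : (1 - p) * (|w.2| - Lv) ≤ (1 - p) * My :=
        mul_le_mul_of_nonneg_left (le_max_left _ _) hq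
      nlinarith [habs]
    · have := mul_nonneg hp hMx0
      have := mul_nonneg hq hMy0
      linarith
  have hM0 : 0 ≤ max (|p * x.2 + (1 - p) * w.2| - Lv) 0 := le_max_right _ _
  have h1 : max (|p * x.2 + (1 - p) * w.2| - Lv) 0 ^ 2 ≤ p * Mx ^ 2 + (1 - p) * My ^ 2 := by
    have h0 := pow_le_pow_left₀ hM0 hM 2
    nlinarith [h0, mul_nonneg (mul_nonneg hp hq) (sq_nonneg (Mx - My))]
  have h2 : 2 * Lv * |p * x.2 + (1 - p) * w.2| ≤ 2 * Lv * (p * |x.2| + (1 - p) * |w.2|) :=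
    mul_le_mul_of_nonneg_left habs (by linarith)
  have h3 : 2 * Lv * |p * x.2 + (1 - p) * w.2| - Lv ^ 2
        + max (|p * x.2 + (1 - p) * w.2| - Lv) 0 ^ 2 ≤
      p * (2 * Lv * |x.2| - Lv ^ 2 + Mx ^ 2) + (1 - p) * (2 * Lv * |w.2| - Lv ^ 2 + My ^ 2) := by
    nlinarith [h1, h2]
  nlinarith [mul_le_mul_of_nonneg_left h3 hβ]

lemma FF_cv {a ymin ymax : ℝ} (ha : 0 < a) (hy : ymin ≤ ymax) :
    ConvexOn ℝ Set.univ (FF a ymin ymax) := by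
  have h := (gg_cv a).sup ((Phi_cv ha.le hy).sup (hh_cv ha hy))
  have : FF a ymin ymax = (gg a ⊔ (Phi a ymin ymax ⊔ hh a ymin ymax)) := by
    funext y; simp [FF, Pi.sup_apply, max_def]
  rw [this]; exact h

lemma sq_abs_sub_abs_le (u v : ℝ) : (|u| - |v|) ^ 2 ≤ (u - v) ^ 2 := by
  have h := abs_abs_sub_abs_le_abs_sub u v
  have h2 := pow_le_pow_left₀ (abs_nonneg (|u| - |v|)) h 2
  rw [sq_abs, sq_abs] at h2
  exact h2

lemma num3 (a s P Q r e C D : ℝ) (ha2 : (0:ℝ) ≤ a ^ 2 + 1)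
    (hcc : (P - r) ^ 2 ≤ C) (hdd : (Q - e) ^ 2 ≤ D)
    (hd1 : 0 ≤ a * (P - r) + (Q - e) - (Q - a * (s - P)))
    (hd2 : 0 ≤ a * (P - r) + (Q - e) + (Q - a * (s - P))) :
    0 ≤ (a ^ 2 + 1) * (C + D) - (Q - a * (s - P)) ^ 2 := by
  nlinarith [mul_nonneg ha2 (sub_nonneg.2 hcc), mul_nonneg ha2 (sub_nonneg.2 hdd),
    sq_nonneg ((P - r) - a * (Q - e)), mul_nonneg hd1 hd2]

lemma num4g (a s P Q : ℝ)
    (m1 : 0 ≤ (Q * a - (a ^ 2 * s + P)) * ((a ^ 2 + 1) * s - Q * a))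
    (m2 : 0 ≤ (s - P) * (a * Q + (a ^ 2 + 1) * P)) :
    0 ≤ Q ^ 2 - (a ^ 2 + 1) * ((Q - a * s) ^ 2 + P ^ 2) := by
  nlinarith [m1, m2]

lemma num4p (a s P Q r C D : ℝ) (hr : 0 ≤ r)
    (hcc : (P - r) ^ 2 ≤ C) (hdd2 : (Q - a * (s - r)) ^ 2 ≤ D)
    (m3 : 0 ≤ r * (Q * a - a ^ 2 * s - P)) :
    0 ≤ C + D - P ^ 2 - (Q - a * s) ^ 2 := by
  nlinarith [hcc, hdd2, m3, sq_nonneg r, sq_nonneg (a * r)]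

lemma num5p (a s P Q r v C D : ℝ) (ha2 : (0:ℝ) ≤ a ^ 2 + 1)
    (hcc : (P - r) ^ 2 ≤ C) (hdd2 : (Q - a * (s - r)) ^ 2 ≤ D)
    (hveq : (a ^ 2 + 1) * v = (a ^ 2 + 1) * (s ^ 2 - P ^ 2))
    (hA3 : 0 ≤ r * (s - P)) :
    0 ≤ (a ^ 2 + 1) * (C + D + v) - Q ^ 2 := by
  nlinarith [mul_nonneg ha2 (sub_nonneg.2 hcc), mul_nonneg ha2 (sub_nonneg.2 hdd2),
    mul_nonneg ha2 hA3, hveq, sq_nonneg ((a ^ 2 + 1) * (s - r) - a * Q)]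

namespace Key

variable {a ymin ymax : ℝ}

set_option maxHeartbeats 1000000 in
lemma reg1 (ha : 0 < a) (hy : ymin < ymax) (y : ℝ × ℝ)
    (h1 : y.1 ≤ ymin ∨ ymax ≤ y.1) :
    1 / 2 * y.1 ^ 2 + a ^ 2 / (2 * (a ^ 2 + 1)) * y.2 ^ 2 = FF a ymin ymax y := by
  have hs : 0 < (ymax - ymin) / 2 := by linarith
  have ha2 : (0:ℝ) < a ^ 2 + 1 := by positivity
  have hβ : (0:ℝ) ≤ a ^ 2 / (2 * (a ^ 2 + 1)) := by positivity
  have hbdd := bddA a ymin ymax y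
  have hKne : (lz y '' K a ymin ymax).Nonempty := Set.Nonempty.image _ ⟨_, midK ha.le hy.le⟩
  unfold FF
  have haa : (0:ℝ) < a ^ 2 := by positivity
  apply le_antisymm
  · exact le_trans (le_of_eq (by unfold gg; ring)) (le_max_left _ _)
  · apply max_le
    · exact le_of_eq (by unfold gg; ring)
    apply max_le
    · -- Phi ≤
      refine csSup_le hKne ?_
      rintro v ⟨z, ⟨hz1, hz2, hz3⟩, rfl⟩
      have hdd : (|y.2| - |z.2|) ^ 2 ≤ (y.2 - z.2) ^ 2 := sq_abs_sub_abs_le y.2 z.2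
      have he2 : |z.2| ^ 2 ≤ a ^ 2 * (y.1 - z.1) ^ 2 := by
        rcases h1 with hL | hR
        · have h0 : (ymin + ymax) / 2 - z.1 ≤ |z.1 - (ymin + ymax) / 2| := by
            rw [abs_sub_comm]; exact le_abs_self _
          have hz3' : |z.2| ≤ a * (z.1 - y.1) := by
            refine hz3.trans (mul_le_mul_of_nonneg_left (by linarith) ha.le)
          nlinarith [mul_self_le_mul_self (abs_nonneg z.2) hz3']
        · have h0 : z.1 - (ymin + ymax) / 2 ≤ |z.1 - (ymin + ymax) / 2| := le_abs_self _
          have hz3' : |z.2| ≤ a * (y.1 - z.1) := by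
            refine hz3.trans (mul_le_mul_of_nonneg_left (by linarith) ha.le)
          nlinarith [mul_self_le_mul_self (abs_nonneg z.2) hz3']
      have A1 : 0 ≤ (a ^ 2 + 1) * (a ^ 2 * (y.1 - z.1) ^ 2 - |z.2| ^ 2) :=
        mul_nonneg ha2.le (by linarith)
      have A2 : 0 ≤ (a ^ 2 * (a ^ 2 + 1)) * ((y.2 - z.2) ^ 2 - (|y.2| - |z.2|) ^ 2) :=
        mul_nonneg (by positivity) (by linarith)
      have A3 : a ^ 2 * |y.2| ^ 2 = a ^ 2 * y.2 ^ 2 := by rw [sq_abs]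
      have hkey : 0 ≤ a ^ 2 * ((a ^ 2 + 1) * ((y.1 - z.1) ^ 2 + (y.2 - z.2) ^ 2) - y.2 ^ 2) := by
        nlinarith [A1, A2, A3, sq_nonneg (|z.2| - a ^ 2 * (|y.2| - |z.2|))]
      have hnum : 0 ≤ (a ^ 2 + 1) * ((y.1 - z.1) ^ 2 + (y.2 - z.2) ^ 2) - y.2 ^ 2 := by
        nlinarith [hkey, haa]
      have hexp : 1 / 2 * y.1 ^ 2 + a ^ 2 / (2 * (a ^ 2 + 1)) * y.2 ^ 2 - lz y z =
          ((a ^ 2 + 1) * ((y.1 - z.1) ^ 2 + (y.2 - z.2) ^ 2) - y.2 ^ 2) / (2 * (a ^ 2 + 1)) := by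
        unfold lz; field_simp; ring
      have := div_nonneg hnum (by positivity : (0:ℝ) ≤ 2 * (a ^ 2 + 1))
      linarith [hexp, this]
    · -- hh ≤
      have hL0 : 0 ≤ LL a ymin ymax := by
        unfold LL; exact mul_nonneg (by positivity) hs.le
      have hT : 2 * LL a ymin ymax * |y.2| - LL a ymin ymax ^ 2
          + max (|y.2| - LL a ymin ymax) 0 ^ 2 ≤ y.2 ^ 2 := by
        rcases le_total (|y.2|) (LL a ymin ymax) with h | h
        · rw [max_eq_right (by linarith)]
          nlinarith [sq_abs y.2, sq_nonneg (|y.2| - LL a ymin ymax)]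
        · rw [max_eq_left (by linarith)]
          nlinarith [sq_abs y.2]
      have hup := mul_le_mul_of_nonneg_left hT hβ
      have hquad : 0 ≤ (y.1 - ymin) * (y.1 - ymax) := by
        rcases h1 with hL | hR
        · nlinarith
        · nlinarith
      unfold hh
      nlinarith [hup, hquad]

set_option maxHeartbeats 1000000 in
lemma reg2 (ha : 0 < a) (hy : ymin < ymax) (y : ℝ × ℝ)
    (hy1 : ymin < y.1) (hy2 : y.1 < ymax)
    (h2 : |y.2| < a * (((ymax - ymin) / 2) - |y.1 - (ymin + ymax) / 2|)) :
    1 / 2 * (y.1 ^ 2 + y.2 ^ 2) = FF a ymin ymax y := by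
  have hs : 0 < (ymax - ymin) / 2 := by linarith
  have ha2 : (0:ℝ) < a ^ 2 + 1 := by positivity
  have hβ : (0:ℝ) ≤ a ^ 2 / (2 * (a ^ 2 + 1)) := by positivity
  have hbdd := bddA a ymin ymax y
  have hKne : (lz y '' K a ymin ymax).Nonempty := Set.Nonempty.image _ ⟨_, midK ha.le hy.le⟩
  have hble : a ^ 2 / (2 * (a ^ 2 + 1)) ≤ 1 / 2 := by
    rw [div_le_iff₀ (by positivity)]; nlinarith
  unfold FF
  apply le_antisymm
  · refine le_trans ?_ ((le_max_left _ _).trans (le_max_right _ _))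
    refine le_trans (le_of_eq ?_) (le_csSup hbdd ⟨y, ⟨hy1.le, hy2.le, h2.le⟩, rfl⟩)
    unfold lz; ring
  · apply max_le
    · unfold gg
      nlinarith [mul_le_mul_of_nonneg_right hble (sq_nonneg y.2)]
    apply max_le
    · refine csSup_le hKne ?_
      rintro v ⟨z, hz, rfl⟩
      have := lz_le y z; linarith
    · obtain ⟨Q, hQ⟩ : ∃ q, |y.2| = q := ⟨_, rfl⟩
      have hQ0 : 0 ≤ Q := hQ ▸ abs_nonneg y.2
      have hQsq : y.2 ^ 2 = Q ^ 2 := by rw [← hQ, sq_abs]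
      rw [hQ] at h2
      have hP0 : 0 ≤ |y.1 - (ymin + ymax) / 2| := abs_nonneg _
      have hLgap : LL a ymin ymax - a * ((ymax - ymin) / 2) = ((ymax - ymin) / 2) / a := by
        unfold LL; field_simp; ring
      have hdiv : 0 < ((ymax - ymin) / 2) / a := div_pos hs ha
      have hQL : Q ≤ LL a ymin ymax := by nlinarith [mul_nonneg ha.le hP0]
      unfold hh
      rw [hQ, max_eq_right (by linarith : Q - LL a ymin ymax ≤ 0)]
      have hexp : 1 / 2 * (y.1 ^ 2 + y.2 ^ 2) -
          ((ymin + ymax) / 2 * y.1 - ymin * ymax / 2 + a ^ 2 / (2 * (a ^ 2 + 1)) *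
            (2 * LL a ymin ymax * Q - LL a ymin ymax ^ 2 + 0 ^ 2)) =
          ((y.1 - (ymin + ymax) / 2) ^ 2 + (Q - a * ((ymax - ymin) / 2)) ^ 2) / 2 := by
        rw [hQsq]; unfold LL; field_simp; ring
      nlinarith [hexp, sq_nonneg (y.1 - (ymin + ymax) / 2),
        sq_nonneg (Q - a * ((ymax - ymin) / 2))]

set_option maxHeartbeats 1500000 in
lemma reg3 (ha : 0 < a) (hy : ymin < ymax) (y : ℝ × ℝ)
    (hy1 : ymin < y.1) (hy2 : y.1 < ymax)
    (h2 : a * (((ymax - ymin) / 2) - |y.1 - (ymin + ymax) / 2|) ≤ |y.2|)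
    (h3 : |y.2| < (a ^ 2 + 1) / a * ((ymax - ymin) / 2) - a * (((ymax - ymin) / 2) - |y.1 - (ymin + ymax) / 2|) / a ^ 2) :
    1 / 2 * (y.1 ^ 2 + y.2 ^ 2) - (|y.2| - a * (((ymax - ymin) / 2) - |y.1 - (ymin + ymax) / 2|)) ^ 2 / (2 * (a ^ 2 + 1))
      = FF a ymin ymax y := by
  have hs : 0 < (ymax - ymin) / 2 := by linarith
  have ha2 : (0:ℝ) < a ^ 2 + 1 := by positivity
  have hβ : (0:ℝ) ≤ a ^ 2 / (2 * (a ^ 2 + 1)) := by positivity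
  have hbdd := bddA a ymin ymax y
  have hKne : (lz y '' K a ymin ymax).Nonempty := Set.Nonempty.image _ ⟨_, midK ha.le hy.le⟩
  obtain ⟨Q, hQ⟩ : ∃ q, |y.2| = q := ⟨_, rfl⟩
  obtain ⟨P, hP⟩ : ∃ p, |y.1 - (ymin + ymax) / 2| = p := ⟨_, rfl⟩
  have hQ0 : 0 ≤ Q := hQ ▸ abs_nonneg y.2
  have hQsq : y.2 ^ 2 = Q ^ 2 := by rw [← hQ, sq_abs]
  have hP0 : 0 ≤ P := hP ▸ abs_nonneg _
  have hPsq : (y.1 - (ymin + ymax) / 2) ^ 2 = P ^ 2 := by rw [← hP, sq_abs]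
  have hPles : P ≤ (ymax - ymin) / 2 := by
    rw [← hP]; exact abs_le.2 ⟨by linarith, by linarith⟩
  rw [hQ, hP] at h2 h3 ⊢
  have hkey3 : (a ^ 2 + 1) / a * ((ymax - ymin) / 2)
      - a * ((ymax - ymin) / 2 - P) / a ^ 2 = (a ^ 2 * ((ymax - ymin) / 2) + P) / a := by
    field_simp; ring
  rw [hkey3] at h3
  have h3' : Q * a < a ^ 2 * ((ymax - ymin) / 2) + P := (lt_div_iff₀ ha).1 h3
  have hu0 : 0 ≤ Q - a * ((ymax - ymin) / 2 - P) := by linarith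
  unfold FF
  apply le_antisymm
  · -- witness: foot of the perpendicular
    refine le_trans ?_ ((le_max_left _ _).trans (le_max_right _ _))
    have hsx : y.1 - (ymin + ymax) / 2 = P ∨ y.1 - (ymin + ymax) / 2 = -P := by
      rcases abs_cases (y.1 - (ymin + ymax) / 2) with ⟨h, _⟩ | ⟨h, _⟩
      · left; rw [← hP, h]
      · right; rw [← hP, h]; ring
    have hsy : y.2 = Q ∨ y.2 = -Q := by
      rcases abs_cases y.2 with ⟨h, _⟩ | ⟨h, _⟩
      · left; rw [← hQ, h]
      · right; rw [← hQ, h]; ring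
    obtain ⟨u, hu⟩ : ∃ t, t = Q - a * ((ymax - ymin) / 2 - P) := ⟨_, rfl⟩
    obtain ⟨θ, hθ⟩ : ∃ t, t = P - a * u / (a ^ 2 + 1) := ⟨_, rfl⟩
    obtain ⟨ζ, hζ⟩ : ∃ t, t = Q - u / (a ^ 2 + 1) := ⟨_, rfl⟩
    have hu0' : 0 ≤ u := by rw [hu]; exact hu0
    have hθalt : θ = (P + a ^ 2 * ((ymax - ymin) / 2) - Q * a) / (a ^ 2 + 1) := by
      rw [hθ, hu]; field_simp; ring
    have hθ0 : 0 ≤ θ := by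
      rw [hθalt]; apply div_nonneg _ ha2.le; linarith
    have hθP : θ ≤ P := by
      rw [hθ]
      have h0 : 0 ≤ a * u / (a ^ 2 + 1) := by
        apply div_nonneg (mul_nonneg ha.le hu0') ha2.le
      linarith
    have hζalt : ζ = (a ^ 2 * Q + a * ((ymax - ymin) / 2 - P)) / (a ^ 2 + 1) := by
      rw [hζ, hu]; field_simp; ring
    have hζ0 : 0 ≤ ζ := by
      rw [hζalt]; apply div_nonneg _ ha2.le
      have := mul_nonneg ha.le (by linarith : (0:ℝ) ≤ (ymax - ymin) / 2 - P)
      nlinarith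
    have hedge : ζ = a * ((ymax - ymin) / 2 - θ) := by
      rw [hζ, hθ, hu]; field_simp; ring
    rcases hsx with hx | hx <;> rcases hsy with hw | hw
    · -- z = (mid + θ, ζ)
      have hzK : (((ymin + ymax) / 2 + θ, ζ) : ℝ × ℝ) ∈ K a ymin ymax := by
        refine ⟨show ymin ≤ (ymin + ymax) / 2 + θ by linarith,
          show (ymin + ymax) / 2 + θ ≤ ymax by linarith, ?_⟩
        have e1 : ((ymin + ymax) / 2 + θ) - (ymin + ymax) / 2 = θ := by ring
        show |ζ| ≤ a * ((ymax - ymin) / 2 - |((ymin + ymax) / 2 + θ) - (ymin + ymax) / 2|)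
        rw [e1, abs_of_nonneg hζ0, abs_of_nonneg hθ0]
        exact le_of_eq hedge
      refine le_trans (le_of_eq ?_) (le_csSup hbdd ⟨_, hzK, rfl⟩)
      unfold lz
      rw [hθ, hζ, hu]
      rw [show y.1 = (ymin + ymax) / 2 + P by linarith, hw]
      field_simp; ring
    · have hzK : (((ymin + ymax) / 2 + θ, -ζ) : ℝ × ℝ) ∈ K a ymin ymax := by
        refine ⟨by linarith, by linarith, ?_⟩
        have e1 : ((ymin + ymax) / 2 + θ) - (ymin + ymax) / 2 = θ := by ring
        show |(-ζ)| ≤ a * ((ymax - ymin) / 2 - |((ymin + ymax) / 2 + θ) - (ymin + ymax) / 2|)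
        rw [e1, abs_neg, abs_of_nonneg hζ0, abs_of_nonneg hθ0]
        exact le_of_eq hedge
      refine le_trans (le_of_eq ?_) (le_csSup hbdd ⟨_, hzK, rfl⟩)
      unfold lz
      rw [hθ, hζ, hu]
      rw [show y.1 = (ymin + ymax) / 2 + P by linarith, hw]
      field_simp; ring
    · have hzK : (((ymin + ymax) / 2 - θ, ζ) : ℝ × ℝ) ∈ K a ymin ymax := by
        refine ⟨by linarith, by linarith, ?_⟩
        have e1 : ((ymin + ymax) / 2 - θ) - (ymin + ymax) / 2 = -θ := by ring
        show |ζ| ≤ a * ((ymax - ymin) / 2 - |((ymin + ymax) / 2 - θ) - (ymin + ymax) / 2|)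
        rw [e1, abs_neg, abs_of_nonneg hζ0, abs_of_nonneg hθ0]
        exact le_of_eq hedge
      refine le_trans (le_of_eq ?_) (le_csSup hbdd ⟨_, hzK, rfl⟩)
      unfold lz
      rw [hθ, hζ, hu]
      rw [show y.1 = (ymin + ymax) / 2 - P by linarith, hw]
      field_simp; ring
    · have hzK : (((ymin + ymax) / 2 - θ, -ζ) : ℝ × ℝ) ∈ K a ymin ymax := by
        refine ⟨by linarith, by linarith, ?_⟩
        have e1 : ((ymin + ymax) / 2 - θ) - (ymin + ymax) / 2 = -θ := by ring
        show |(-ζ)| ≤ a * ((ymax - ymin) / 2 - |((ymin + ymax) / 2 - θ) - (ymin + ymax) / 2|)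
        rw [e1, abs_neg, abs_neg, abs_of_nonneg hζ0, abs_of_nonneg hθ0]
        exact le_of_eq hedge
      refine le_trans (le_of_eq ?_) (le_csSup hbdd ⟨_, hzK, rfl⟩)
      unfold lz
      rw [hθ, hζ, hu]
      rw [show y.1 = (ymin + ymax) / 2 - P by linarith, hw]
      field_simp; ring
  · apply max_le
    · -- gg
      have hQu : Q - a * ((ymax - ymin) / 2 - P) ≤ Q := by
        have := mul_nonneg ha.le (by linarith : (0:ℝ) ≤ (ymax - ymin) / 2 - P)
        linarith
      have hgg : 1 / 2 * (y.1 ^ 2 + y.2 ^ 2) - (Q - a * ((ymax - ymin) / 2 - P)) ^ 2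
            / (2 * (a ^ 2 + 1)) - gg a y
          = (Q ^ 2 - (Q - a * ((ymax - ymin) / 2 - P)) ^ 2) / (2 * (a ^ 2 + 1)) := by
        unfold gg; rw [hQsq]; field_simp; ring
      have hnum : 0 ≤ Q ^ 2 - (Q - a * ((ymax - ymin) / 2 - P)) ^ 2 := by
        have h := mul_nonneg (sub_nonneg.2 hQu)
          (show 0 ≤ Q + (Q - a * ((ymax - ymin) / 2 - P)) by linarith)
        nlinarith [h]
      have := div_nonneg hnum (by positivity : (0:ℝ) ≤ 2 * (a ^ 2 + 1))
      linarith
    apply max_le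
    · -- Phi
      refine csSup_le hKne ?_
      rintro v ⟨z, ⟨hz1, hz2, hz3⟩, rfl⟩
      obtain ⟨r, hr⟩ : ∃ t, |z.1 - (ymin + ymax) / 2| = t := ⟨_, rfl⟩
      obtain ⟨e, he⟩ : ∃ t, |z.2| = t := ⟨_, rfl⟩
      have hr0' : 0 ≤ r := hr ▸ abs_nonneg _
      have he0 : 0 ≤ e := he ▸ abs_nonneg _
      rw [hr, he] at hz3
      have h0 := sq_abs_sub_abs_le (y.1 - (ymin + ymax) / 2) (z.1 - (ymin + ymax) / 2)
      rw [hP, hr] at h0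
      have hcc : (P - r) ^ 2 ≤ (y.1 - z.1) ^ 2 := by nlinarith [h0]
      have h0' := sq_abs_sub_abs_le y.2 z.2
      rw [hQ, he] at h0'
      have hdd : (Q - e) ^ 2 ≤ (y.2 - z.2) ^ 2 := h0'
      have hexp : 1 / 2 * (y.1 ^ 2 + y.2 ^ 2) - (Q - a * ((ymax - ymin) / 2 - P)) ^ 2
            / (2 * (a ^ 2 + 1)) - lz y z
          = ((a ^ 2 + 1) * ((y.1 - z.1) ^ 2 + (y.2 - z.2) ^ 2)
            - (Q - a * ((ymax - ymin) / 2 - P)) ^ 2) / (2 * (a ^ 2 + 1)) := by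
        unfold lz; field_simp; ring
      have hδ1 : 0 ≤ a * (P - r) + (Q - e) - (Q - a * ((ymax - ymin) / 2 - P)) := by
        nlinarith [hz3]
      have hδ2 : 0 ≤ a * (P - r) + (Q - e) + (Q - a * ((ymax - ymin) / 2 - P)) := by
        nlinarith [hz3]
      have hnum := num3 a ((ymax - ymin) / 2) P Q r e ((y.1 - z.1) ^ 2) ((y.2 - z.2) ^ 2)
        ha2.le hcc hdd hδ1 hδ2
      have := div_nonneg hnum (by positivity : (0:ℝ) ≤ 2 * (a ^ 2 + 1))
      linarith
    · -- hh
      have hLa : a * LL a ymin ymax = (a ^ 2 + 1) * ((ymax - ymin) / 2) := by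
        unfold LL; field_simp
      have hQL : Q ≤ LL a ymin ymax := by
        have haQ : a * Q ≤ a * LL a ymin ymax := by nlinarith [h3', hPles]
        exact le_of_mul_le_mul_left haQ ha
      unfold hh
      rw [hQ, max_eq_right (by linarith : Q - LL a ymin ymax ≤ 0)]
      have hexp : 1 / 2 * (y.1 ^ 2 + y.2 ^ 2) - (Q - a * ((ymax - ymin) / 2 - P)) ^ 2
            / (2 * (a ^ 2 + 1))
          - ((ymin + ymax) / 2 * y.1 - ymin * ymax / 2 + a ^ 2 / (2 * (a ^ 2 + 1)) *
            (2 * LL a ymin ymax * Q - LL a ymin ymax ^ 2 + 0 ^ 2))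
          = ((a ^ 2 + 1) * ((y.1 - (ymin + ymax) / 2) ^ 2 + (Q - a * ((ymax - ymin) / 2)) ^ 2)
            - (Q - a * ((ymax - ymin) / 2 - P)) ^ 2) / (2 * (a ^ 2 + 1)) := by
        rw [hQsq]; unfold LL; field_simp; ring
      have hPsq2 : (a ^ 2 + 1) * (y.1 - (ymin + ymax) / 2) ^ 2 = (a ^ 2 + 1) * P ^ 2 := by
        rw [hPsq]
      have hnum : 0 ≤ (a ^ 2 + 1) * ((y.1 - (ymin + ymax) / 2) ^ 2
            + (Q - a * ((ymax - ymin) / 2)) ^ 2)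
          - (Q - a * ((ymax - ymin) / 2 - P)) ^ 2 := by
        nlinarith [hPsq2, sq_nonneg (P - a * (Q - a * ((ymax - ymin) / 2)))]
      have := div_nonneg hnum (by positivity : (0:ℝ) ≤ 2 * (a ^ 2 + 1))
      linarith

set_option maxHeartbeats 1500000 in
lemma reg4 (ha : 0 < a) (hy : ymin < ymax) (y : ℝ × ℝ)
    (hy1 : ymin < y.1) (hy2 : y.1 < ymax)
    (h2 : a * (((ymax - ymin) / 2) - |y.1 - (ymin + ymax) / 2|) ≤ |y.2|)
    (h3 : (a ^ 2 + 1) / a * ((ymax - ymin) / 2) - a * (((ymax - ymin) / 2) - |y.1 - (ymin + ymax) / 2|) / a ^ 2 ≤ |y.2|)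
    (h4 : |y.2| ≤ (a ^ 2 + 1) / a * ((ymax - ymin) / 2)) :
    1 / 2 * (y.1 ^ 2 + y.2 ^ 2) - (|y.2| - a * (((ymax - ymin) / 2) - |y.1 - (ymin + ymax) / 2|)) ^ 2 / (2 * (a ^ 2 + 1))
      - a ^ 2 / (2 * (a ^ 2 + 1)) *
        (|y.2| - (a ^ 2 + 1) / a * ((ymax - ymin) / 2) + a * (((ymax - ymin) / 2) - |y.1 - (ymin + ymax) / 2|) / a ^ 2) ^ 2
      = FF a ymin ymax y := by
  have hs : 0 < (ymax - ymin) / 2 := by linarith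
  have ha2 : (0:ℝ) < a ^ 2 + 1 := by positivity
  have hβ : (0:ℝ) ≤ a ^ 2 / (2 * (a ^ 2 + 1)) := by positivity
  have hbdd := bddA a ymin ymax y
  have hKne : (lz y '' K a ymin ymax).Nonempty := Set.Nonempty.image _ ⟨_, midK ha.le hy.le⟩
  obtain ⟨Q, hQ⟩ : ∃ q, |y.2| = q := ⟨_, rfl⟩
  obtain ⟨P, hP⟩ : ∃ p, |y.1 - (ymin + ymax) / 2| = p := ⟨_, rfl⟩
  have hQ0 : 0 ≤ Q := hQ ▸ abs_nonneg y.2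
  have hQsq : y.2 ^ 2 = Q ^ 2 := by rw [← hQ, sq_abs]
  have hP0 : 0 ≤ P := hP ▸ abs_nonneg _
  have hPsq : (y.1 - (ymin + ymax) / 2) ^ 2 = P ^ 2 := by rw [← hP, sq_abs]
  have hPles : P ≤ (ymax - ymin) / 2 := by
    rw [← hP]; exact abs_le.2 ⟨by linarith, by linarith⟩
  rw [hQ] at h2 h3 h4 ⊢
  rw [hP] at h2 h3 ⊢
  have hkey3 : (a ^ 2 + 1) / a * ((ymax - ymin) / 2)
      - a * ((ymax - ymin) / 2 - P) / a ^ 2 = (a ^ 2 * ((ymax - ymin) / 2) + P) / a := by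
    field_simp; ring
  rw [hkey3] at h3
  have h3' : a ^ 2 * ((ymax - ymin) / 2) + P ≤ Q * a := (div_le_iff₀ ha).1 h3
  have h4' : Q * a ≤ (a ^ 2 + 1) * ((ymax - ymin) / 2) := by
    have e1 : (a ^ 2 + 1) / a * ((ymax - ymin) / 2)
        = ((a ^ 2 + 1) * ((ymax - ymin) / 2)) / a := by ring
    rw [e1] at h4
    exact (le_div_iff₀ ha).1 h4
  have hsx : y.1 - (ymin + ymax) / 2 = P ∨ y.1 - (ymin + ymax) / 2 = -P := by
    rcases abs_cases (y.1 - (ymin + ymax) / 2) with ⟨h, _⟩ | ⟨h, _⟩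
    · left; rw [← hP, h]
    · right; rw [← hP, h]; ring
  have hsy : y.2 = Q ∨ y.2 = -Q := by
    rcases abs_cases y.2 with ⟨h, _⟩ | ⟨h, _⟩
    · left; rw [← hQ, h]
    · right; rw [← hQ, h]; ring
  unfold FF
  apply le_antisymm
  · -- witness: the top/bottom vertex of K
    refine le_trans ?_ ((le_max_left _ _).trans (le_max_right _ _))
    have hv0 : (0:ℝ) ≤ a * ((ymax - ymin) / 2) := mul_nonneg ha.le hs.le
    rcases hsy with hw | hw
    · have hzK : (((ymin + ymax) / 2, a * ((ymax - ymin) / 2)) : ℝ × ℝ) ∈ K a ymin ymax := by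
        refine ⟨show ymin ≤ (ymin + ymax) / 2 by linarith,
          show (ymin + ymax) / 2 ≤ ymax by linarith, ?_⟩
        show |a * ((ymax - ymin) / 2)| ≤
          a * ((ymax - ymin) / 2 - |(ymin + ymax) / 2 - (ymin + ymax) / 2|)
        rw [sub_self, abs_zero, sub_zero, abs_of_nonneg hv0]
      refine le_trans (le_of_eq ?_) (le_csSup hbdd ⟨_, hzK, rfl⟩)
      unfold lz
      rcases hsx with hx | hx
      · rw [show y.1 = (ymin + ymax) / 2 + P by linarith, hw]; field_simp; ring
      · rw [show y.1 = (ymin + ymax) / 2 - P by linarith, hw]; field_simp; ring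
    · have hzK : (((ymin + ymax) / 2, -(a * ((ymax - ymin) / 2))) : ℝ × ℝ) ∈ K a ymin ymax := by
        refine ⟨show ymin ≤ (ymin + ymax) / 2 by linarith,
          show (ymin + ymax) / 2 ≤ ymax by linarith, ?_⟩
        show |(-(a * ((ymax - ymin) / 2)))| ≤
          a * ((ymax - ymin) / 2 - |(ymin + ymax) / 2 - (ymin + ymax) / 2|)
        rw [sub_self, abs_zero, sub_zero, abs_neg, abs_of_nonneg hv0]
      refine le_trans (le_of_eq ?_) (le_csSup hbdd ⟨_, hzK, rfl⟩)
      unfold lz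
      rcases hsx with hx | hx
      · rw [show y.1 = (ymin + ymax) / 2 + P by linarith, hw]; field_simp; ring
      · rw [show y.1 = (ymin + ymax) / 2 - P by linarith, hw]; field_simp; ring
  · apply max_le
    · -- gg
      have hexp : 1 / 2 * (y.1 ^ 2 + y.2 ^ 2)
            - (Q - a * ((ymax - ymin) / 2 - P)) ^ 2 / (2 * (a ^ 2 + 1))
            - a ^ 2 / (2 * (a ^ 2 + 1)) * (Q - (a ^ 2 + 1) / a * ((ymax - ymin) / 2)
              + a * ((ymax - ymin) / 2 - P) / a ^ 2) ^ 2 - gg a y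
          = (Q ^ 2 - (a ^ 2 + 1) * ((Q - a * ((ymax - ymin) / 2)) ^ 2 + P ^ 2))
            / (2 * (a ^ 2 + 1)) := by
        unfold gg; rw [hQsq]; field_simp; ring
      have m1 : 0 ≤ (Q * a - (a ^ 2 * ((ymax - ymin) / 2) + P))
          * ((a ^ 2 + 1) * ((ymax - ymin) / 2) - Q * a) :=
        mul_nonneg (by linarith) (by linarith)
      have m2 : 0 ≤ ((ymax - ymin) / 2 - P) * (a * Q + (a ^ 2 + 1) * P) :=
        mul_nonneg (by linarith)
          (add_nonneg (mul_nonneg ha.le hQ0) (mul_nonneg ha2.le hP0))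
      have hnum : 0 ≤ Q ^ 2 - (a ^ 2 + 1) * ((Q - a * ((ymax - ymin) / 2)) ^ 2 + P ^ 2) :=
        num4g a ((ymax - ymin) / 2) P Q m1 m2
      have := div_nonneg hnum (by positivity : (0:ℝ) ≤ 2 * (a ^ 2 + 1))
      linarith
    apply max_le
    · -- Phi
      refine csSup_le hKne ?_
      rintro v ⟨z, ⟨hz1, hz2, hz3⟩, rfl⟩
      obtain ⟨r, hr⟩ : ∃ t, |z.1 - (ymin + ymax) / 2| = t := ⟨_, rfl⟩
      obtain ⟨e, he⟩ : ∃ t, |z.2| = t := ⟨_, rfl⟩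
      have hr0' : 0 ≤ r := hr ▸ abs_nonneg _
      have he0 : 0 ≤ e := he ▸ abs_nonneg _
      rw [hr, he] at hz3
      have h0 := sq_abs_sub_abs_le (y.1 - (ymin + ymax) / 2) (z.1 - (ymin + ymax) / 2)
      rw [hP, hr] at h0
      have hcc : (P - r) ^ 2 ≤ (y.1 - z.1) ^ 2 := by nlinarith [h0]
      have h0' := sq_abs_sub_abs_le y.2 z.2
      rw [hQ, he] at h0'
      have hdd : (Q - e) ^ 2 ≤ (y.2 - z.2) ^ 2 := h0'
      have hexp : 1 / 2 * (y.1 ^ 2 + y.2 ^ 2)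
            - (Q - a * ((ymax - ymin) / 2 - P)) ^ 2 / (2 * (a ^ 2 + 1))
            - a ^ 2 / (2 * (a ^ 2 + 1)) * (Q - (a ^ 2 + 1) / a * ((ymax - ymin) / 2)
              + a * ((ymax - ymin) / 2 - P) / a ^ 2) ^ 2 - lz y z
          = ((y.1 - z.1) ^ 2 + (y.2 - z.2) ^ 2 - P ^ 2
              - (Q - a * ((ymax - ymin) / 2)) ^ 2) / 2 := by
        unfold lz; field_simp; ring
      have hQs : a * ((ymax - ymin) / 2) ≤ Q := by
        have h5 : a * (a * ((ymax - ymin) / 2)) ≤ a * Q := by nlinarith [h3', hP0]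
        exact le_of_mul_le_mul_left h5 ha
      have hQe0 : 0 ≤ Q - a * ((ymax - ymin) / 2 - r) := by
        have := mul_nonneg ha.le hr0'
        linarith
      have hQe : Q - a * ((ymax - ymin) / 2 - r) ≤ Q - e := by linarith
      have hdd2 : (Q - a * ((ymax - ymin) / 2 - r)) ^ 2 ≤ (y.2 - z.2) ^ 2 :=
        le_trans (pow_le_pow_left₀ hQe0 hQe 2) hdd
      have m3 : 0 ≤ r * (Q * a - a ^ 2 * ((ymax - ymin) / 2) - P) :=
        mul_nonneg hr0' (by linarith)
      have hnum : 0 ≤ (y.1 - z.1) ^ 2 + (y.2 - z.2) ^ 2 - P ^ 2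
          - (Q - a * ((ymax - ymin) / 2)) ^ 2 := by
        have h6 := num4p a ((ymax - ymin) / 2) P Q r ((y.1 - z.1) ^ 2) ((y.2 - z.2) ^ 2)
          hr0' hcc hdd2 m3
        linarith
      have := div_nonneg hnum (by norm_num : (0:ℝ) ≤ 2)
      linarith
    · -- hh : equality here
      have hLL : LL a ymin ymax = (a ^ 2 + 1) / a * ((ymax - ymin) / 2) := rfl
      unfold hh
      rw [hQ, max_eq_right (by rw [hLL]; linarith : Q - LL a ymin ymax ≤ 0)]
      have hexp : 1 / 2 * (y.1 ^ 2 + y.2 ^ 2)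
            - (Q - a * ((ymax - ymin) / 2 - P)) ^ 2 / (2 * (a ^ 2 + 1))
            - a ^ 2 / (2 * (a ^ 2 + 1)) * (Q - (a ^ 2 + 1) / a * ((ymax - ymin) / 2)
              + a * ((ymax - ymin) / 2 - P) / a ^ 2) ^ 2
            - ((ymin + ymax) / 2 * y.1 - ymin * ymax / 2 + a ^ 2 / (2 * (a ^ 2 + 1)) *
              (2 * LL a ymin ymax * Q - LL a ymin ymax ^ 2 + 0 ^ 2))
          = ((y.1 - (ymin + ymax) / 2) ^ 2 - P ^ 2) / 2 := by
        rw [hLL, hQsq]; field_simp; ring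
      linarith [hexp, hPsq]

set_option maxHeartbeats 1500000 in
lemma reg5 (ha : 0 < a) (hy : ymin < ymax) (y : ℝ × ℝ)
    (hy1 : ymin < y.1) (hy2 : y.1 < ymax)
    (h4 : (a ^ 2 + 1) / a * ((ymax - ymin) / 2) < |y.2|) :
    1 / 2 * y.1 ^ 2 + a ^ 2 / (2 * (a ^ 2 + 1)) * y.2 ^ 2
      + 1 / 2 * (y.1 - ymin) * (ymax - y.1) = FF a ymin ymax y := by
  have hs : 0 < (ymax - ymin) / 2 := by linarith
  have ha2 : (0:ℝ) < a ^ 2 + 1 := by positivity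
  have hβ : (0:ℝ) ≤ a ^ 2 / (2 * (a ^ 2 + 1)) := by positivity
  have hbdd := bddA a ymin ymax y
  have hKne : (lz y '' K a ymin ymax).Nonempty := Set.Nonempty.image _ ⟨_, midK ha.le hy.le⟩
  have hLL : LL a ymin ymax = (a ^ 2 + 1) / a * ((ymax - ymin) / 2) := rfl
  obtain ⟨Q, hQ⟩ : ∃ q, |y.2| = q := ⟨_, rfl⟩
  obtain ⟨P, hP⟩ : ∃ p, |y.1 - (ymin + ymax) / 2| = p := ⟨_, rfl⟩
  have hQ0 : 0 ≤ Q := hQ ▸ abs_nonneg y.2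
  have hQsq : y.2 ^ 2 = Q ^ 2 := by rw [← hQ, sq_abs]
  have hP0 : 0 ≤ P := hP ▸ abs_nonneg _
  have hPsq : (y.1 - (ymin + ymax) / 2) ^ 2 = P ^ 2 := by rw [← hP, sq_abs]
  have hPles : P ≤ ((ymax - ymin) / 2) := by
    rw [← hP]; exact abs_le.2 ⟨by linarith, by linarith⟩
  rw [hQ] at h4
  have hQbig : (a ^ 2 + 1) * ((ymax - ymin) / 2) < Q * a := by
    have e1 : (a ^ 2 + 1) / a * ((ymax - ymin) / 2) = ((a ^ 2 + 1) * ((ymax - ymin) / 2)) / a := by ring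
    rw [e1] at h4
    exact (div_lt_iff₀ ha).1 h4
  have hEq : 1 / 2 * y.1 ^ 2 + a ^ 2 / (2 * (a ^ 2 + 1)) * y.2 ^ 2
      + 1 / 2 * (y.1 - ymin) * (ymax - y.1) = hh a ymin ymax y := by
    unfold hh
    rw [hQ, max_eq_left (by rw [hLL]; linarith : 0 ≤ Q - LL a ymin ymax)]
    rw [hQsq, hLL]; field_simp; ring
  apply le_antisymm
  · exact le_trans (le_of_eq hEq) ((le_max_right _ _).trans (le_max_right _ _))
  · apply max_le
    · unfold gg
      nlinarith [mul_nonneg (by linarith : (0:ℝ) ≤ y.1 - ymin)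
        (by linarith : (0:ℝ) ≤ ymax - y.1)]
    apply max_le
    · refine csSup_le hKne ?_
      rintro v ⟨z, ⟨hz1, hz2, hz3⟩, rfl⟩
      obtain ⟨r, hr⟩ : ∃ t, |z.1 - (ymin + ymax) / 2| = t := ⟨_, rfl⟩
      obtain ⟨e, he⟩ : ∃ t, |z.2| = t := ⟨_, rfl⟩
      have hr0' : 0 ≤ r := hr ▸ abs_nonneg _
      have he0 : 0 ≤ e := he ▸ abs_nonneg _
      rw [hr, he] at hz3
      have hrs : r ≤ ((ymax - ymin) / 2) := by
        rw [← hr]; exact abs_le.2 ⟨by linarith, by linarith⟩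
      have h0 := sq_abs_sub_abs_le (y.1 - (ymin + ymax) / 2) (z.1 - (ymin + ymax) / 2)
      rw [hP, hr] at h0
      have hcc : (P - r) ^ 2 ≤ (y.1 - z.1) ^ 2 := by nlinarith [h0]
      have h0' := sq_abs_sub_abs_le y.2 z.2
      rw [hQ, he] at h0'
      have hdd : (Q - e) ^ 2 ≤ (y.2 - z.2) ^ 2 := h0'
      have hexp : 1 / 2 * y.1 ^ 2 + a ^ 2 / (2 * (a ^ 2 + 1)) * y.2 ^ 2
          + 1 / 2 * (y.1 - ymin) * (ymax - y.1) - lz y z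
          = ((a ^ 2 + 1) * ((y.1 - z.1) ^ 2 + (y.2 - z.2) ^ 2
              + (y.1 - ymin) * (ymax - y.1)) - y.2 ^ 2) / (2 * (a ^ 2 + 1)) := by
        unfold lz; field_simp; ring
      have hQs : a * (((ymax - ymin) / 2) - r) ≤ Q := by
        have h5 : a * (a * (((ymax - ymin) / 2) - r)) ≤ a * Q := by
          nlinarith [hQbig, mul_nonneg (mul_nonneg ha.le ha.le) hr0', hs.le]
        exact le_of_mul_le_mul_left h5 ha
      have hQe0 : 0 ≤ Q - a * (((ymax - ymin) / 2) - r) := by linarith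
      have hQe : Q - a * (((ymax - ymin) / 2) - r) ≤ Q - e := by linarith
      have hdd2 : (Q - a * (((ymax - ymin) / 2) - r)) ^ 2 ≤ (y.2 - z.2) ^ 2 :=
        le_trans (pow_le_pow_left₀ hQe0 hQe 2) hdd
      have hveq : (a ^ 2 + 1) * ((y.1 - ymin) * (ymax - y.1))
          = (a ^ 2 + 1) * ((((ymax - ymin) / 2)) ^ 2 - P ^ 2) := by
        rw [← hPsq]; ring
      have hA3 : 0 ≤ r * (((ymax - ymin) / 2) - P) := mul_nonneg hr0' (by linarith)
      have hnum : 0 ≤ (a ^ 2 + 1) * ((y.1 - z.1) ^ 2 + (y.2 - z.2) ^ 2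
          + (y.1 - ymin) * (ymax - y.1)) - Q ^ 2 := by
        have h6 := num5p a ((ymax - ymin) / 2) P Q r ((y.1 - ymin) * (ymax - y.1))
          ((y.1 - z.1) ^ 2) ((y.2 - z.2) ^ 2) ha2.le hcc hdd2 hveq hA3
        linarith
      rw [← hQsq] at hnum
      have := div_nonneg hnum (by positivity : (0:ℝ) ≤ 2 * (a ^ 2 + 1))
      linarith
    · exact le_of_eq hEq.symm

set_option maxHeartbeats 800000 in
lemma key (ha : 0 < a) (hy : ymin < ymax) (y : ℝ × ℝ) :
    fa (a ^ 2) ymin ymax y = FF a ymin ymax y := by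
  have has : Real.sqrt (a ^ 2) = a := Real.sqrt_sq ha.le
  unfold fa
  split_ifs with h1 h2 h3 h4
  · exact reg1 ha hy y h1
  all_goals push_neg at h1
  all_goals obtain ⟨hy1, hy2⟩ := h1
  all_goals have hr0 : r0 (a ^ 2) ymin ymax y.1 = a * ((ymax - ymin) / 2 - |y.1 - (ymin + ymax) / 2|) := by simp only [r0, Set.mem_Icc]; rw [if_pos ⟨hy1.le, hy2.le⟩, has]
  · rw [hr0] at h2
    exact reg2 ha hy y hy1 hy2 h2
  · rw [hr0] at h2 h3
    rw [has] at h3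
    rw [hr0]
    push_neg at h2
    exact reg3 ha hy y hy1 hy2 h2 h3
  · rw [hr0] at h2 h3
    rw [has] at h3 h4
    rw [hr0, has]
    push_neg at h2 h3
    exact reg4 ha hy y hy1 hy2 h2 h3 h4
  · rw [hr0] at h2 h3
    rw [has] at h3 h4
    push_neg at h2 h3 h4
    exact reg5 ha hy y hy1 hy2 h4

end Key
end CvAux

theorem stmt_4 (b ymin ymax : ℝ) (hb : 0 < b) (hy : ymin < ymax) :
    ConvexOn ℝ Set.univ (fa b ymin ymax) := by
  have ha : 0 < Real.sqrt b := Real.sqrt_pos.2 hb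
  have hb2 : Real.sqrt b ^ 2 = b := Real.sq_sqrt hb.le
  have hkey := CvAux.Key.key ha hy
  rw [hb2] at hkey
  have hFF := CvAux.FF_cv ha hy.le
  have : fa b ymin ymax = CvAux.FF (Real.sqrt b) ymin ymax := funext hkey
  rw [this]
  exact hFF
end

section
/- Let f : ℝ^d → ℝ be continuous, let B, C ⊂ ℝ^d be open and disjoint with C convex, assume f is locally convex on B ∪ C, and assume f is continuously differentiable on the interior of B ∪ C̄ (where C̄ denotes the closure of C). Then f is locally convex on the interior of B ∪ C̄. -/
open Metric

/-- A function on an open subset `Ω` of `ℝ^d` is locally convex on `Ω` if every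
point of `Ω` has an open ball around it contained in `Ω` on which the function
is convex. -/
def LocallyConvexOn {d : ℕ} (Ω : Set (EuclideanSpace ℝ (Fin d)))
    (f : EuclideanSpace ℝ (Fin d) → ℝ) : Prop :=
  ∀ x ∈ Ω, ∃ r > 0, ball x r ⊆ Ω ∧ ConvexOn ℝ (ball x r) f

open Set

lemma monotoneOn_of_localRight {φ : ℝ → ℝ} {u v : ℝ} (hc : ContinuousOn φ (Icc u v))
    (H : ∀ t ∈ Ico u v, ∃ ε > 0, ∀ s ∈ Icc u v, t < s → s ≤ t + ε → φ t ≤ φ s) :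
    MonotoneOn φ (Icc u v) := by
  intro s hs t ht hst
  rcases eq_or_lt_of_le hst with rfl | hlt
  · exact le_rfl
  set A := {r ∈ Icc s t | φ s ≤ φ r} with hA
  have hsub : Icc s t ⊆ Icc u v := Icc_subset_Icc hs.1 ht.2
  have hA_closed : IsClosed A :=
    (hc.mono hsub).preimage_isClosed_of_isClosed isClosed_Icc isClosed_Ici
  have hne : A.Nonempty := ⟨s, ⟨le_rfl, hst⟩, le_rfl⟩
  have hbdd : BddAbove A := ⟨t, fun r hr => hr.1.2⟩
  have hm := hA_closed.csSup_mem hne hbdd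
  obtain ⟨⟨hsm, hmt⟩, hφm⟩ := hm
  rcases eq_or_lt_of_le hmt with heq | hmlt
  · rwa [heq] at hφm
  · exfalso
    obtain ⟨ε, hε, hmono⟩ := H (sSup A) ⟨hs.1.trans hsm, lt_of_lt_of_le hmlt ht.2⟩
    set m := sSup A
    set r := min t (m + ε) with hr
    have hmr : m < r := lt_min hmlt (by linarith)
    have hrt : r ≤ t := min_le_left _ _
    have hrIcc : r ∈ Icc u v := ⟨hs.1.trans (hsm.trans hmr.le), hrt.trans ht.2⟩
    have h1 : φ m ≤ φ r := hmono r hrIcc hmr (min_le_right _ _)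
    have hrA : r ∈ A := ⟨⟨hsm.trans hmr.le, hrt⟩, hφm.trans h1⟩
    exact absurd (le_csSup hbdd hrA) (not_le.mpr hmr)

lemma monotoneOn_of_localLeft {φ : ℝ → ℝ} {u v : ℝ} (hc : ContinuousOn φ (Icc u v))
    (H : ∀ t ∈ Ioc u v, ∃ ε > 0, ∀ s ∈ Icc u v, s < t → t - ε ≤ s → φ s ≤ φ t) :
    MonotoneOn φ (Icc u v) := by
  intro s hs t ht hst
  rcases eq_or_lt_of_le hst with rfl | hlt
  · exact le_rfl
  set A := {r ∈ Icc s t | φ r ≤ φ t} with hA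
  have hsub : Icc s t ⊆ Icc u v := Icc_subset_Icc hs.1 ht.2
  have hA_closed : IsClosed A :=
    (hc.mono hsub).preimage_isClosed_of_isClosed isClosed_Icc isClosed_Iic
  have hne : A.Nonempty := ⟨t, ⟨hst, le_rfl⟩, le_rfl⟩
  have hbdd : BddBelow A := ⟨s, fun r hr => hr.1.1⟩
  have hm := hA_closed.csInf_mem hne hbdd
  obtain ⟨⟨hsm, hmt⟩, hφm⟩ := hm
  rcases eq_or_lt_of_le hsm with heq | hslt
  · rwa [← heq] at hφm
  · exfalso
    obtain ⟨ε, hε, hmono⟩ := H (sInf A) ⟨lt_of_le_of_lt hs.1 hslt, hmt.trans ht.2⟩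
    set m := sInf A
    set r := max s (m - ε) with hr
    have hmr : r < m := max_lt hslt (by linarith)
    have hsr : s ≤ r := le_max_left _ _
    have hrIcc : r ∈ Icc u v := ⟨hs.1.trans hsr, ((hmr.le.trans hmt)).trans ht.2⟩
    have h1 : φ r ≤ φ m := hmono r hrIcc hmr (le_max_right _ _)
    have hrA : r ∈ A := ⟨⟨hsr, hmr.le.trans hmt⟩, h1.trans hφm⟩
    exact absurd (csInf_le hbdd hrA) (not_le.mpr hmr)

lemma convexOn_closure_of_continuous {E : Type*} [NormedAddCommGroup E] [NormedSpace ℝ E]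
    {C : Set E} {f : E → ℝ} (hf : Continuous f) (hC : Convex ℝ C) (h : ConvexOn ℝ C f) :
    ConvexOn ℝ (closure C) f := by
  refine ⟨hC.closure, fun u hu v hv a b ha hb hab => ?_⟩
  have hmem : (u, v) ∈ closure (C ×ˢ C) := by
    rw [closure_prod_eq]; exact ⟨hu, hv⟩
  have hclosed : IsClosed {p : E × E | f (a • p.1 + b • p.2) ≤ a * f p.1 + b * f p.2} := by
    apply isClosed_le
    · exact hf.comp (by fun_prop)
    · fun_prop
  have : closure (C ×ˢ C) ⊆ {p : E × E | f (a • p.1 + b • p.2) ≤ a * f p.1 + b * f p.2} :=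
    closure_minimal (fun p hp => h.2 hp.1 hp.2 ha hb hab) hclosed
  exact this hmem

theorem stmt_14 (d : ℕ) (f : EuclideanSpace ℝ (Fin d) → ℝ) (hf : Continuous f)
    (B C : Set (EuclideanSpace ℝ (Fin d)))
    (hB : IsOpen B) (hC : IsOpen C) (hBC : Disjoint B C) (hCconv : Convex ℝ C)
    (hloc : LocallyConvexOn (B ∪ C) f)
    (hdiff : ContDiffOn ℝ 1 f (interior (B ∪ closure C))) :
    LocallyConvexOn (interior (B ∪ closure C)) f := by
  set Ω : Set (EuclideanSpace ℝ (Fin d)) := interior (B ∪ closure C) with hΩdef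
  have hΩo : IsOpen Ω := isOpen_interior
  have hBCΩ : B ∪ C ⊆ Ω :=
    (hB.union hC).subset_interior_iff.mpr (union_subset_union_right B subset_closure)
  have hΩsub : Ω ⊆ B ∪ closure C := interior_subset
  have hdiffAt : ∀ w ∈ Ω, DifferentiableAt ℝ f w := fun w hw =>
    ((hdiff.differentiableOn one_ne_zero).differentiableAt (hΩo.mem_nhds hw))
  have hfderiv_cont : ContinuousOn (fderiv ℝ f) Ω :=
    hdiff.continuousOn_fderiv_of_isOpen hΩo le_rfl
  -- line map derivative
  have hline : ∀ (y z : EuclideanSpace ℝ (Fin d)) (t : ℝ),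
      HasDerivAt (fun s : ℝ => (AffineMap.lineMap y z : ℝ →ᵃ[ℝ] EuclideanSpace ℝ (Fin d)) s) (z - y) t := by
    intro y z t
    have h1 : HasDerivAt (fun s : ℝ => s • (z - y) + y) ((1 : ℝ) • (z - y)) t :=
      ((hasDerivAt_id t).smul_const (z - y)).add_const y
    simp only [one_smul] at h1
    have heq : (fun s : ℝ => (AffineMap.lineMap y z : ℝ →ᵃ[ℝ] EuclideanSpace ℝ (Fin d)) s)
        = fun s : ℝ => s • (z - y) + y := by
      funext s
      simp [AffineMap.lineMap_apply_module']
    rw [heq]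
    exact h1
  have hLcont : ∀ y z : EuclideanSpace ℝ (Fin d), Continuous (fun s : ℝ => (AffineMap.lineMap y z : ℝ →ᵃ[ℝ] EuclideanSpace ℝ (Fin d)) s) :=
    fun y z => continuous_iff_continuousAt.mpr fun t => (hline y z t).continuousAt
  have hgdA : ∀ (y z : EuclideanSpace ℝ (Fin d)) (t : ℝ), (AffineMap.lineMap y z : ℝ →ᵃ[ℝ] EuclideanSpace ℝ (Fin d)) t ∈ Ω →
      HasDerivAt (f ∘ (AffineMap.lineMap y z : ℝ →ᵃ[ℝ] EuclideanSpace ℝ (Fin d)))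
        ((fderiv ℝ f ((AffineMap.lineMap y z : ℝ →ᵃ[ℝ] EuclideanSpace ℝ (Fin d)) t)) (z - y)) t := by
    intro y z t ht
    exact ((hdiffAt _ ht).hasFDerivAt).comp_hasDerivAt t (hline y z t)
  have hcontderiv : ∀ y z : EuclideanSpace ℝ (Fin d), (∀ t ∈ Icc (0:ℝ) 1, (AffineMap.lineMap y z : ℝ →ᵃ[ℝ] EuclideanSpace ℝ (Fin d)) t ∈ Ω) →
      ContinuousOn (deriv (f ∘ (AffineMap.lineMap y z : ℝ →ᵃ[ℝ] EuclideanSpace ℝ (Fin d)))) (Icc (0:ℝ) 1) := by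
    intro y z hseg
    have hcf : ContinuousOn
        (fun t : ℝ => (fderiv ℝ f ((AffineMap.lineMap y z : ℝ →ᵃ[ℝ] EuclideanSpace ℝ (Fin d)) t)) (z - y))
        (Icc (0:ℝ) 1) := by
      apply (ContinuousLinearMap.apply ℝ ℝ (z - y)).continuous.comp_continuousOn
      exact hfderiv_cont.comp (hLcont y z).continuousOn (fun t ht => hseg t ht)
    exact hcf.congr (fun t ht => (hgdA y z t (hseg t ht)).deriv)
  have hlocmono : ∀ (y z : EuclideanSpace ℝ (Fin d)) (t : ℝ), (AffineMap.lineMap y z : ℝ →ᵃ[ℝ] EuclideanSpace ℝ (Fin d)) t ∈ B ∪ C →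
      ∃ ε > 0, MonotoneOn (deriv (f ∘ (AffineMap.lineMap y z : ℝ →ᵃ[ℝ] EuclideanSpace ℝ (Fin d))))
        (Ioo (t - ε) (t + ε)) := by
    intro y z t ht'
    obtain ⟨ρ, hρ, hsubB, hcv⟩ := hloc _ ht'
    have hpre : (fun s : ℝ => (AffineMap.lineMap y z : ℝ →ᵃ[ℝ] EuclideanSpace ℝ (Fin d)) s) ⁻¹'
        (ball ((AffineMap.lineMap y z : ℝ →ᵃ[ℝ] EuclideanSpace ℝ (Fin d)) t) ρ) ∈ nhds t :=
      (hLcont y z).continuousAt.preimage_mem_nhds (ball_mem_nhds _ hρ)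
    obtain ⟨ε, hε, hIoo⟩ := Metric.mem_nhds_iff.mp hpre
    refine ⟨ε, hε, ?_⟩
    have hmem : ∀ s ∈ Ioo (t - ε) (t + ε),
        (AffineMap.lineMap y z : ℝ →ᵃ[ℝ] EuclideanSpace ℝ (Fin d)) s ∈ ball ((AffineMap.lineMap y z : ℝ →ᵃ[ℝ] EuclideanSpace ℝ (Fin d)) t) ρ := by
      intro s hs
      apply hIoo
      rwa [Real.ball_eq_Ioo]
    have hconvIoo : ConvexOn ℝ (Ioo (t - ε) (t + ε)) (f ∘ (AffineMap.lineMap y z : ℝ →ᵃ[ℝ] EuclideanSpace ℝ (Fin d))) :=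
      (hcv.comp_affineMap _).subset (fun s hs => hmem s hs) (convex_Ioo _ _)
    exact hconvIoo.monotoneOn_deriv
      (fun s hs => (hgdA y z s (hBCΩ (hsubB (hmem s hs)))).differentiableAt)
  -- key: from monotone deriv to the convexity inequality
  have key : ∀ y z : EuclideanSpace ℝ (Fin d), (∀ t ∈ Icc (0:ℝ) 1, (AffineMap.lineMap y z : ℝ →ᵃ[ℝ] EuclideanSpace ℝ (Fin d)) t ∈ Ω) →
      MonotoneOn (deriv (f ∘ (AffineMap.lineMap y z : ℝ →ᵃ[ℝ] EuclideanSpace ℝ (Fin d)))) (Icc (0:ℝ) 1) →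
      ∀ a b : ℝ, 0 ≤ a → 0 ≤ b → a + b = 1 → f (a • y + b • z) ≤ a * f y + b * f z := by
    intro y z hseg hmono a b ha hb hab
    have hgc : ConvexOn ℝ (Icc (0:ℝ) 1) (f ∘ (AffineMap.lineMap y z : ℝ →ᵃ[ℝ] EuclideanSpace ℝ (Fin d))) := by
      apply MonotoneOn.convexOn_of_deriv (convex_Icc 0 1)
      · exact (hf.comp (hLcont y z)).continuousOn
      · rw [interior_Icc]
        exact fun t ht =>
          (hgdA y z t (hseg t (Ioo_subset_Icc_self ht))).differentiableAt.differentiableWithinAt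
      · rw [interior_Icc]
        exact hmono.mono Ioo_subset_Icc_self
    have h01 := hgc.2 (left_mem_Icc.mpr zero_le_one) (right_mem_Icc.mpr zero_le_one) ha hb hab
    have hb1 : a • (0:ℝ) + b • (1:ℝ) = b := by simp
    rw [hb1] at h01
    simp only [Function.comp_apply, AffineMap.lineMap_apply_module] at h01
    simp only [sub_zero, one_smul, zero_smul, add_zero, sub_self, zero_add] at h01
    have hae : a = 1 - b := by linarith
    simp only [smul_eq_mul] at h01
    rw [hae] at h01 ⊢
    exact h01
  -- convexity on C
  have hCc : ConvexOn ℝ C f := by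
    refine ⟨hCconv, fun y hy z hz a b ha hb hab => ?_⟩
    have hseg : ∀ t ∈ Icc (0:ℝ) 1, (AffineMap.lineMap y z : ℝ →ᵃ[ℝ] EuclideanSpace ℝ (Fin d)) t ∈ Ω := by
      intro t ht
      apply hBCΩ
      right
      rw [AffineMap.lineMap_apply_module]
      exact hCconv hy hz (by linarith [ht.2]) ht.1 (by ring)
    refine key y z hseg ?_ a b ha hb hab
    apply monotoneOn_of_localRight (hcontderiv y z hseg)
    intro t ht
    have htBC : (AffineMap.lineMap y z : ℝ →ᵃ[ℝ] EuclideanSpace ℝ (Fin d)) t ∈ B ∪ C := by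
      right
      rw [AffineMap.lineMap_apply_module]
      exact hCconv hy hz (by linarith [ht.2]) ht.1 (by ring)
    obtain ⟨ε, hε, hmono⟩ := hlocmono y z t htBC
    refine ⟨ε / 2, by linarith, fun s hs hts hsle => ?_⟩
    exact hmono ⟨by linarith, by linarith⟩ ⟨by linarith, by linarith⟩ hts.le
  have hCbar : ConvexOn ℝ (closure C) f := convexOn_closure_of_continuous hf hCconv hCc
  -- main argument
  intro x hx
  obtain ⟨r, hr, hball⟩ := Metric.isOpen_iff.mp hΩo x hx
  refine ⟨r, hr, hball, convex_ball x r, fun y hy z hz a b ha hb hab => ?_⟩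
  have hseg : ∀ t ∈ Icc (0:ℝ) 1, (AffineMap.lineMap y z : ℝ →ᵃ[ℝ] EuclideanSpace ℝ (Fin d)) t ∈ Ω := by
    intro t ht
    apply hball
    rw [AffineMap.lineMap_apply_module]
    exact (convex_ball x r) hy hz (by linarith [ht.2]) ht.1 (by ring)
  refine key y z hseg ?_ a b ha hb hab
  set L : ℝ →ᵃ[ℝ] EuclideanSpace ℝ (Fin d) := AffineMap.lineMap y z with hLdef
  set φ := deriv (f ∘ L) with hφdef
  set A : Set ℝ := Icc (0:ℝ) 1 ∩ (L ⁻¹' closure C) with hAdef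
  have hnotA : ∀ t ∈ Icc (0:ℝ) 1, t ∉ A → L t ∈ B := by
    intro t ht htA
    rcases hΩsub (hseg t ht) with h | h
    · exact h
    · exact absurd ⟨ht, h⟩ htA
  by_cases hAe : A.Nonempty
  · -- A nonempty
    have hA_conv : Convex ℝ A := (convex_Icc 0 1).inter (hCconv.closure.affine_preimage L)
    have hA_closed : IsClosed A :=
      isClosed_Icc.inter (isClosed_closure.preimage (hLcont y z))
    have hA_bddB : BddBelow A := ⟨0, fun t ht => ht.1.1⟩
    have hA_bddA : BddAbove A := ⟨1, fun t ht => ht.1.2⟩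
    have hA_eq : A = Icc (sInf A) (sSup A) :=
      eq_Icc_csInf_csSup_of_connected_bdd_closed ⟨hAe, hA_conv.isPreconnected⟩
        hA_bddB hA_bddA hA_closed
    set p := sInf A with hp
    set q := sSup A with hq
    obtain ⟨w, hw⟩ := hAe
    have hpw : p ≤ w := csInf_le hA_bddB hw
    have hwq : w ≤ q := le_csSup hA_bddA hw
    have hpq : p ≤ q := hpw.trans hwq
    have hqA : q ∈ A := by rw [hA_eq]; exact ⟨hpq, le_rfl⟩
    have hq01 : q ∈ Icc (0:ℝ) 1 := hqA.1
    have hmonoA : MonotoneOn φ A := by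
      have hconvA : ConvexOn ℝ A (f ∘ L) :=
        (hCbar.comp_affineMap L).subset (fun t ht => ht.2) hA_conv
      exact hconvA.monotoneOn_deriv
        (fun t ht => (hgdA y z t (hseg t ht.1)).differentiableAt)
    have h1 : MonotoneOn φ (Icc (0:ℝ) q) := by
      apply monotoneOn_of_localRight
        ((hcontderiv y z hseg).mono (Icc_subset_Icc le_rfl hq01.2))
      intro t ht
      have ht01 : t ∈ Icc (0:ℝ) 1 := ⟨ht.1, ht.2.le.trans hq01.2⟩
      by_cases htA : t ∈ A
      · refine ⟨1, one_pos, fun s hs hts hsle => ?_⟩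
        have hpt : p ≤ t := by rw [hA_eq] at htA; exact htA.1
        have hsA : s ∈ A := by rw [hA_eq]; exact ⟨hpt.trans hts.le, hs.2⟩
        exact hmonoA htA hsA hts.le
      · obtain ⟨ε, hε, hmono⟩ := hlocmono y z t (Or.inl (hnotA t ht01 htA))
        refine ⟨ε / 2, by linarith, fun s hs hts hsle => ?_⟩
        exact hmono ⟨by linarith, by linarith⟩ ⟨by linarith, by linarith⟩ hts.le
    have h2 : MonotoneOn φ (Icc q 1) := by
      apply monotoneOn_of_localLeft
        ((hcontderiv y z hseg).mono (Icc_subset_Icc hq01.1 le_rfl))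
      intro t ht
      have ht01 : t ∈ Icc (0:ℝ) 1 := ⟨hq01.1.trans ht.1.le, ht.2⟩
      have htA : t ∉ A := fun h => absurd (le_csSup hA_bddA h) (not_le.mpr ht.1)
      obtain ⟨ε, hε, hmono⟩ := hlocmono y z t (Or.inl (hnotA t ht01 htA))
      refine ⟨ε / 2, by linarith, fun s hs hst hge => ?_⟩
      exact hmono ⟨by linarith, by linarith⟩ ⟨by linarith, by linarith⟩ hst.le
    intro s hs t ht hst
    rcases le_total t q with h | h
    · exact h1 ⟨hs.1, hst.trans h⟩ ⟨ht.1, h⟩ hst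
    · rcases le_total q s with h' | h'
      · exact h2 ⟨h', hs.2⟩ ⟨h, ht.2⟩ hst
      · exact (h1 ⟨hs.1, h'⟩ ⟨hq01.1, le_rfl⟩ h').trans (h2 ⟨le_rfl, hq01.2⟩ ⟨h, ht.2⟩ h)
  · -- A empty
    apply monotoneOn_of_localRight (hcontderiv y z hseg)
    intro t ht
    have ht01 : t ∈ Icc (0:ℝ) 1 := ⟨ht.1, ht.2.le⟩
    have htA : t ∉ A := fun h => hAe ⟨t, h⟩
    obtain ⟨ε, hε, hmono⟩ := hlocmono y z t (Or.inl (hnotA t ht01 htA))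
    refine ⟨ε / 2, by linarith, fun s hs hts hsle => ?_⟩
    exact hmono ⟨by linarith, by linarith⟩ ⟨by linarith, by linarith⟩ hts.le
end

section
/- Let d ≥ 2, let Ω ⊂ ℝ^d be open, let f : Ω → ℝ be continuous, and let x ∈ Ω. Then the following are equivalent: (i) there exists r > 0 with B(x, r) ⊂ Ω such that f is convex on B(x, r); (ii) there exists r > 0 with B(x, r) ⊂ Ω such that every y ∈ B(x, r) admits a local subgradient of f. -/
open Metric

open scoped RealInnerProductSpace

/-- Forward direction: a continuous convex function on an open ball has a
subgradient at each point. -/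
lemma aux_fwd {E : Type*} [NormedAddCommGroup E] [InnerProductSpace ℝ E]
    [CompleteSpace E]
    (f : E → ℝ) (x : E) (r : ℝ) (hfc : ContinuousOn f (ball x r))
    (hconv : ConvexOn ℝ (ball x r) f) (y : E) (hy : y ∈ ball x r) :
    ∃ v : E, ∀ z ∈ ball x r, f y + ⟪v, z - y⟫ ≤ f z := by
  set S : Set (E × ℝ) := {p | p.1 ∈ ball x r ∧ f p.1 < p.2} with hS
  have hopen : IsOpen S := by
    have h1 : ContinuousOn (fun p : E × ℝ => p.2 - f p.1)
        (ball x r ×ˢ (Set.univ : Set ℝ)) :=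
      continuous_snd.continuousOn.sub
        (hfc.comp continuous_fst.continuousOn (fun p hp => hp.1))
    have h2 := h1.isOpen_inter_preimage (t := Set.Ioi (0:ℝ)) (isOpen_ball.prod isOpen_univ) isOpen_Ioi
    convert h2 using 1
    ext p
    simp [hS, sub_pos, and_comm]
  have hconvS : Convex ℝ S := by
    rintro ⟨p1, t1⟩ ⟨hp1, ht1⟩ ⟨p2, t2⟩ ⟨hp2, ht2⟩ α β hα hβ hαβ
    refine ⟨convex_ball x r hp1 hp2 hα hβ hαβ, ?_⟩
    have h := hconv.2 hp1 hp2 hα hβ hαβ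
    have h2 : α * f p1 + β * f p2 < α * t1 + β * t2 := by
      rcases eq_or_lt_of_le hα with hα0 | hα0
      · have hβ1 : β = 1 := by linarith
        simp [← hα0, hβ1, ht2]
      · exact add_lt_add_of_lt_of_le (mul_lt_mul_of_pos_left ht1 hα0)
          (mul_le_mul_of_nonneg_left ht2.le hβ)
    exact lt_of_le_of_lt h h2
  have hns : ((y, f y) : E × ℝ) ∉ S := fun h => lt_irrefl _ h.2
  obtain ⟨L, hL⟩ := geometric_hahn_banach_open_point hconvS hopen hns
  set G : E →L[ℝ] ℝ := L.comp (ContinuousLinearMap.inl ℝ E ℝ) with hG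
  set β : ℝ := L (0, 1) with hβdef
  have hLsplit : ∀ (z : E) (t : ℝ), L (z, t) = G z + t * β := by
    intro z t
    have : ((z, t) : E × ℝ) = ((z, 0) : E × ℝ) + t • ((0 : E), (1 : ℝ)) := by
      simp [Prod.ext_iff]
    rw [this, map_add, map_smul, smul_eq_mul]
    rfl
  have hβneg : β < 0 := by
    have h1 : L (y, f y + 1) < L (y, f y) :=
      hL (y, f y + 1) ⟨hy, by simp⟩
    rw [hLsplit, hLsplit] at h1
    linarith
  have hkey : ∀ z ∈ ball x r, G z + f z * β ≤ G y + f y * β := by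
    intro z hz
    have h5 : ∀ ε > (0 : ℝ), G z + f z * β < G y + f y * β + ε := by
      intro ε hε
      have htpos : (0 : ℝ) < ε / (-β) := div_pos hε (by linarith)
      have h1 : L (z, f z + ε / (-β)) < L (y, f y) :=
        hL _ ⟨hz, by show f z < f z + ε / (-β); linarith⟩
      rw [hLsplit, hLsplit] at h1
      have hβ0 : β ≠ 0 := ne_of_lt hβneg
      have hdd : β / (-β) = -1 := by rw [div_neg, div_self hβ0]
      have h2 : (f z + ε / (-β)) * β = f z * β - ε := by
        have h2a : (f z + ε / (-β)) * β = f z * β + ε * (β / (-β)) := by ring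
        rw [h2a, hdd]; ring
      rw [h2] at h1
      linarith
    by_contra hcon
    push_neg at hcon
    have := h5 ((G z + f z * β - (G y + f y * β)) / 2) (by linarith)
    linarith
  set c : ℝ := (-β)⁻¹ with hc
  have hcpos : 0 < c := inv_pos.2 (by linarith)
  have hβ0 : β ≠ 0 := ne_of_lt hβneg
  have hbc : β * c = -1 := by
    rw [hc, ← div_eq_mul_inv, div_neg, div_self hβ0]
  refine ⟨(InnerProductSpace.toDual ℝ E).symm (c • G), fun z hz => ?_⟩
  have h2 : (G z + f z * β) * c ≤ (G y + f y * β) * c :=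
    mul_le_mul_of_nonneg_right (hkey z hz) hcpos.le
  have h3 : G z * c + f z * (β * c) ≤ G y * c + f y * (β * c) := by
    ring_nf at h2 ⊢
    linarith
  rw [hbc] at h3
  have h4 : ⟪(InnerProductSpace.toDual ℝ E).symm (c • G), z - y⟫ = c * (G z - G y) := by
    rw [InnerProductSpace.toDual_symm_apply]
    simp [map_sub]
    ring
  rw [h4]
  nlinarith

/-- Reverse direction: local subgradients everywhere on a ball imply convexity. -/
lemma aux_rev {E : Type*} [NormedAddCommGroup E] [InnerProductSpace ℝ E]
    (f : E → ℝ) (x : E) (r : ℝ) (hfc : ContinuousOn f (ball x r))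
    (hsg : ∀ y ∈ ball x r, ∃ v : E, ∃ ρ > (0:ℝ),
      ∀ z ∈ ball y ρ, f y + ⟪v, z - y⟫ ≤ f z) :
    ConvexOn ℝ (ball x r) f := by
  refine ⟨convex_ball x r, ?_⟩
  intro p hp q hq α β hα hβ hαβ
  set γ : ℝ → E := fun s => p + s • (q - p) with hγ
  set g : ℝ → ℝ := fun s => f (γ s) - (f p + s * (f q - f p)) with hg
  have hγball : ∀ s ∈ Set.Icc (0 : ℝ) 1, γ s ∈ ball x r := by
    intro s hs
    have h1 : (1 - s) • p + s • q ∈ ball x r :=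
      convex_ball x r hp hq (by linarith [hs.2]) hs.1 (by ring)
    have h2 : γ s = (1 - s) • p + s • q := by
      simp only [hγ, smul_sub, sub_smul, one_smul]
      abel
    rwa [h2]
  have hγcont : Continuous γ := by
    apply continuous_const.add
    exact continuous_id.smul continuous_const
  have hgcont : ContinuousOn g (Set.Icc (0 : ℝ) 1) := by
    apply ContinuousOn.sub
    · exact hfc.comp hγcont.continuousOn (fun s hs => hγball s hs)
    · exact (continuous_const.add (continuous_id.mul continuous_const)).continuousOn
  have hkey : ∀ s ∈ Set.Icc (0 : ℝ) 1, g s ≤ 0 := by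
    by_contra hcon
    push_neg at hcon
    obtain ⟨s₁, hs₁, hs₁pos⟩ := hcon
    obtain ⟨sm, hsm, hmax⟩ := isCompact_Icc.exists_isMaxOn
      (Set.nonempty_Icc.2 zero_le_one) hgcont
    set M : ℝ := g sm with hM
    have hMpos : 0 < M := lt_of_lt_of_le hs₁pos (hmax hs₁)
    set K : Set ℝ := Set.Icc (0 : ℝ) 1 ∩ g ⁻¹' {M} with hK
    have hKclosed : IsClosed K :=
      hgcont.preimage_isClosed_of_isClosed isClosed_Icc isClosed_singleton
    have hKcompact : IsCompact K :=
      isCompact_Icc.of_isClosed_subset hKclosed Set.inter_subset_left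
    have hKne : K.Nonempty := ⟨sm, hsm, rfl⟩
    set s₀ : ℝ := sSup K with hs₀def
    have hs₀K : s₀ ∈ K := hKcompact.sSup_mem hKne
    have hs₀Icc : s₀ ∈ Set.Icc (0 : ℝ) 1 := hs₀K.1
    have hgs₀ : g s₀ = M := hs₀K.2
    have hg0 : g 0 = 0 := by simp [hg, hγ]
    have hg1 : g 1 = 0 := by
      simp only [hg, hγ, one_smul, one_mul]
      have h7 : p + (q - p) = q := by abel
      rw [h7]
      ring
    have hs₀pos : 0 < s₀ := by
      rcases lt_or_eq_of_le hs₀Icc.1 with h | h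
      · exact h
      · exfalso; rw [← h, hg0] at hgs₀; linarith
    have hs₀lt : s₀ < 1 := by
      rcases lt_or_eq_of_le hs₀Icc.2 with h | h
      · exact h
      · exfalso; rw [h, hg1] at hgs₀; linarith
    obtain ⟨v, ρ, hρ, hsub⟩ := hsg (γ s₀) (hγball s₀ hs₀Icc)
    set cc : ℝ := ⟪v, q - p⟫ with hcc
    have hdiff : ∀ s : ℝ, γ s - γ s₀ = (s - s₀) • (q - p) := by
      intro s
      simp only [hγ, sub_smul]
      abel
    have hinner : ∀ s : ℝ, γ s ∈ ball (γ s₀) ρ →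
        f (γ s₀) + (s - s₀) * cc ≤ f (γ s) := by
      intro s hs
      have := hsub (γ s) hs
      rwa [hdiff, real_inner_smul_right] at this
    set δ : ℝ := ρ / (‖q - p‖ + 1) with hδdef
    have hnorm1 : (0 : ℝ) < ‖q - p‖ + 1 := by positivity
    have hδpos : 0 < δ := div_pos hρ hnorm1
    have hmem : ∀ s : ℝ, |s - s₀| < δ → γ s ∈ ball (γ s₀) ρ := by
      intro s hs
      rw [mem_ball, dist_eq_norm, hdiff, norm_smul, Real.norm_eq_abs]
      calc |s - s₀| * ‖q - p‖ ≤ |s - s₀| * (‖q - p‖ + 1) :=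
            mul_le_mul_of_nonneg_left (by linarith) (abs_nonneg _)
        _ < δ * (‖q - p‖ + 1) := mul_lt_mul_of_pos_right hs hnorm1
        _ = ρ := div_mul_cancel₀ ρ (ne_of_gt hnorm1)
    set η : ℝ := min δ (min s₀ (1 - s₀)) / 2 with hηdef
    have hηpos : 0 < η := by
      apply div_pos _ two_pos
      exact lt_min hδpos (lt_min hs₀pos (by linarith))
    have hηδ : η < δ := by
      have : min δ (min s₀ (1 - s₀)) ≤ δ := min_le_left _ _
      simp only [hηdef]; linarith
    have hηs₀ : η ≤ s₀ / 2 := by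
      have : min δ (min s₀ (1 - s₀)) ≤ s₀ := le_trans (min_le_right _ _) (min_le_left _ _)
      simp only [hηdef]; linarith
    have hη1 : η ≤ (1 - s₀) / 2 := by
      have : min δ (min s₀ (1 - s₀)) ≤ 1 - s₀ :=
        le_trans (min_le_right _ _) (min_le_right _ _)
      simp only [hηdef]; linarith
    have hpA : f (γ s₀) + η * cc ≤ f (γ (s₀ + η)) := by
      have habs : |s₀ + η - s₀| < δ := by
        have he : s₀ + η - s₀ = η := by ring
        rw [he, abs_of_pos hηpos]
        exact hηδ
      have h8 := hinner (s₀ + η) (hmem _ habs)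
      have h9 : (s₀ + η - s₀) * cc = η * cc := by ring
      rwa [h9] at h8
    have hpB : f (γ s₀) - η * cc ≤ f (γ (s₀ - η)) := by
      have habs : |s₀ - η - s₀| < δ := by
        have he : s₀ - η - s₀ = -η := by ring
        rw [he, abs_neg, abs_of_pos hηpos]
        exact hηδ
      have h8 := hinner (s₀ - η) (hmem _ habs)
      have h9 : (s₀ - η - s₀) * cc = -(η * cc) := by ring
      rw [h9] at h8
      linarith
    have hIccA : s₀ + η ∈ Set.Icc (0 : ℝ) 1 := ⟨by linarith, by linarith⟩
    have hIccB : s₀ - η ∈ Set.Icc (0 : ℝ) 1 := ⟨by linarith, by linarith⟩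
    have hleA : g (s₀ + η) ≤ M := hmax hIccA
    have hleB : g (s₀ - η) ≤ M := hmax hIccB
    have hsum : g (s₀ + η) + g (s₀ - η) ≥ 2 * M := by
      have e1 : g (s₀ + η) = f (γ (s₀ + η)) - (f p + (s₀ + η) * (f q - f p)) := rfl
      have e2 : g (s₀ - η) = f (γ (s₀ - η)) - (f p + (s₀ - η) * (f q - f p)) := rfl
      have e3 : g s₀ = f (γ s₀) - (f p + s₀ * (f q - f p)) := rfl
      rw [e1, e2]
      rw [e3] at hgs₀
      nlinarith [hpA, hpB]
    have heqA : g (s₀ + η) = M := by linarith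
    have hmemK : s₀ + η ∈ K := ⟨hIccA, heqA⟩
    have : s₀ + η ≤ s₀ := le_csSup hKcompact.bddAbove hmemK
    linarith
  have hβmem : β ∈ Set.Icc (0 : ℝ) 1 := ⟨hβ, by linarith⟩
  have h1 := hkey β hβmem
  have h2 : γ β = α • p + β • q := by
    have hα1 : α = 1 - β := by linarith
    simp only [hγ, smul_sub, hα1, sub_smul, one_smul]
    abel
  simp only [hg, h2] at h1
  simp only [smul_eq_mul]
  have h3 : f p + β * (f q - f p) = α * f p + β * f q := by
    have hα1 : α = 1 - β := by linarith
    rw [hα1]; ring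
  linarith

theorem stmt_15 (d : ℕ) (hd : 2 ≤ d)
    (Ω : Set (EuclideanSpace ℝ (Fin d))) (hΩ : IsOpen Ω)
    (f : EuclideanSpace ℝ (Fin d) → ℝ) (hf : ContinuousOn f Ω)
    (x : EuclideanSpace ℝ (Fin d)) (hx : x ∈ Ω) :
    (∃ r > 0, ball x r ⊆ Ω ∧ ConvexOn ℝ (ball x r) f) ↔
    (∃ r > 0, ball x r ⊆ Ω ∧ ∀ y ∈ ball x r,
      ∃ v : EuclideanSpace ℝ (Fin d), ∃ ρ > 0, ball y ρ ⊆ Ω ∧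
        ∀ z ∈ ball y ρ, f y + (inner ℝ v (z - y) : ℝ) ≤ f z) := by
  constructor
  · rintro ⟨r, hr, hrΩ, hconv⟩
    refine ⟨r, hr, hrΩ, fun y hy => ?_⟩
    obtain ⟨v, hv⟩ := aux_fwd f x r (hf.mono hrΩ) hconv y hy
    refine ⟨v, r - dist y x, by simpa using hy, ?_, ?_⟩
    · exact (ball_subset_ball' (by linarith)).trans hrΩ
    · intro z hz
      exact hv z (ball_subset_ball' (by linarith) hz)
  · rintro ⟨r, hr, hrΩ, hsg⟩
    refine ⟨r, hr, hrΩ, aux_rev f x r (hf.mono hrΩ) ?_⟩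
    intro y hy
    obtain ⟨v, ρ, hρ, _, hsub⟩ := hsg y hy
    exact ⟨v, ρ, hρ, hsub⟩
end

section
/- Let a₁ < b₁ < a₂ < b₂ be real numbers and let f : [a₁, b₂] → ℝ be continuous. If f is convex on [a₁, a₂] and convex on [b₁, b₂], then f is convex on [a₁, b₂]. -/
open Set

private lemma slope_avg_left {f : ℝ → ℝ} {x w z : ℝ} (hxw : x < w) (hwz : w < z)
    (h : (f w - f x) / (w - x) ≤ (f z - f w) / (z - w)) :
    (f w - f x) / (w - x) ≤ (f z - f x) / (z - x) := by
  have h1 : (0:ℝ) < w - x := by linarith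
  have h2 : (0:ℝ) < z - w := by linarith
  have h3 : (0:ℝ) < z - x := by linarith
  rw [div_le_div_iff₀ h1 h2] at h
  rw [div_le_div_iff₀ h1 h3]
  nlinarith [h]

private lemma slope_avg_right {f : ℝ → ℝ} {x w z : ℝ} (hxw : x < w) (hwz : w < z)
    (h : (f w - f x) / (w - x) ≤ (f z - f w) / (z - w)) :
    (f x - f z) / (x - z) ≤ (f z - f w) / (z - w) := by
  have h1 : (0:ℝ) < w - x := by linarith
  have h2 : (0:ℝ) < z - w := by linarith
  have h3 : (0:ℝ) < z - x := by linarith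
  have hrw : (f x - f z) / (x - z) = (f z - f x) / (z - x) := by
    rw [← neg_div_neg_eq]; ring_nf
  rw [hrw]
  rw [div_le_div_iff₀ h1 h2] at h
  rw [div_le_div_iff₀ h3 h2]
  nlinarith [h]

theorem stmt_16 (a1 b1 a2 b2 : ℝ) (h1 : a1 < b1) (h2 : b1 < a2) (h3 : a2 < b2)
    (f : ℝ → ℝ) (hf : ContinuousOn f (Icc a1 b2))
    (hconv1 : ConvexOn ℝ (Icc a1 a2) f) (hconv2 : ConvexOn ℝ (Icc b1 b2) f) :
    ConvexOn ℝ (Icc a1 b2) f := by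
  apply convexOn_of_slope_mono_adjacent (convex_Icc a1 b2)
  intro x y z hx hz hxy hyz
  -- key lemma: slope across a2 jump: for p ∈ [a1,a2), q ∈ (a2,b2],
  -- slope(p,a2) ≤ slope(a2,q)
  have key : ∀ p q : ℝ, a1 ≤ p → p < a2 → a2 < q → q ≤ b2 →
      (f a2 - f p) / (a2 - p) ≤ (f q - f a2) / (q - a2) := by
    intro p q hp1 hp2 hq1 hq2
    rcases le_or_gt b1 p with hpb | hpb
    · exact hconv2.slope_mono_adjacent ⟨hpb, by linarith⟩ ⟨by linarith, hq2⟩ hp2 hq1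
    · calc (f a2 - f p) / (a2 - p) ≤ (f a2 - f b1) / (a2 - b1) :=
            hconv1.secant_mono_aux3 ⟨hp1, by linarith⟩ ⟨by linarith, le_refl _⟩ hpb h2
        _ ≤ (f q - f a2) / (q - a2) :=
            hconv2.slope_mono_adjacent ⟨le_refl _, by linarith⟩ ⟨by linarith, hq2⟩ h2 hq1
  rcases le_or_gt z a2 with hza | hza
  · -- all in [a1,a2]
    exact hconv1.slope_mono_adjacent ⟨hx.1, by linarith⟩ ⟨hz.1, hza⟩ hxy hyz
  rcases le_or_gt b1 x with hxb | hxb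
  · -- all in [b1,b2]
    exact hconv2.slope_mono_adjacent ⟨hxb, hx.2⟩ ⟨by linarith, hz.2⟩ hxy hyz
  -- now x < b1 and a2 < z
  rcases lt_trichotomy y a2 with hya | hya | hya
  · -- y < a2 : slope(x,y) ≤ slope(y,a2) ≤ slope(y,z)
    have s1 : (f y - f x) / (y - x) ≤ (f a2 - f y) / (a2 - y) :=
      hconv1.slope_mono_adjacent ⟨hx.1, by linarith⟩ ⟨by linarith, le_refl _⟩ hxy hya
    have s2 : (f a2 - f y) / (a2 - y) ≤ (f z - f a2) / (z - a2) :=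
      key y z (by linarith [hx.1]) hya hza hz.2
    have s3 : (f a2 - f y) / (a2 - y) ≤ (f z - f y) / (z - y) :=
      slope_avg_left hya hza s2
    linarith
  · -- y = a2
    subst hya
    exact key x z hx.1 (by linarith) hza hz.2
  · -- a2 < y : slope(x,y) ≤ slope(a2,y) ≤ slope(y,z)
    have s2 : (f a2 - f x) / (a2 - x) ≤ (f y - f a2) / (y - a2) :=
      key x y hx.1 (by linarith) hya (by linarith [hz.2])
    have s1 : (f x - f y) / (x - y) ≤ (f y - f a2) / (y - a2) :=
      slope_avg_right (by linarith : x < a2) hya s2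
    have hrw : (f x - f y) / (x - y) = (f y - f x) / (y - x) := by
      rw [← neg_div_neg_eq]; ring_nf
    rw [hrw] at s1
    have s3 : (f y - f a2) / (y - a2) ≤ (f z - f y) / (z - y) :=
      hconv2.slope_mono_adjacent ⟨le_of_lt h2, by linarith⟩ ⟨by linarith, hz.2⟩ hya hyz
    linarith
end

section
/- Let Ω ⊂ ℝ^n be open and let f : Ω → ℝ be continuous and locally convex. Then for every pair a, b ∈ Ω such that the closed segment {λa + (1−λ)b : λ ∈ [0,1]} is contained in Ω, and for every λ ∈ [0,1], one has f(λa + (1−λ)b) ≤ λ f(a) + (1−λ) f(b). In particular, if Ω is convex then f is convex on Ω. -/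
open Metric Set

theorem stmt_17 (n : ℕ) (Ω : Set (EuclideanSpace ℝ (Fin n))) (hΩ : IsOpen Ω)
    (f : EuclideanSpace ℝ (Fin n) → ℝ) (hf : ContinuousOn f Ω)
    (hloc : ∀ x ∈ Ω, ∃ r > 0, ball x r ⊆ Ω ∧ ConvexOn ℝ (ball x r) f) :
    (∀ a ∈ Ω, ∀ b ∈ Ω, segment ℝ a b ⊆ Ω →
      ∀ t ∈ Icc (0 : ℝ) 1,
        f (t • a + (1 - t) • b) ≤ t * f a + (1 - t) * f b) ∧
    (Convex ℝ Ω → ConvexOn ℝ Ω f) := by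
  have key : ∀ a ∈ Ω, ∀ b ∈ Ω, segment ℝ a b ⊆ Ω →
      ∀ t ∈ Icc (0 : ℝ) 1,
        f (t • a + (1 - t) • b) ≤ t * f a + (1 - t) * f b := by
    intro a ha b hb hseg t ht
    set γ : ℝ → EuclideanSpace ℝ (Fin n) := fun s => s • a + (1 - s) • b with hγ
    have hγmem : ∀ s ∈ Icc (0 : ℝ) 1, γ s ∈ Ω := by
      intro s hs
      exact hseg ⟨s, 1 - s, hs.1, by linarith [hs.2], by ring, rfl⟩
    have hγcont : Continuous γ := by
      apply Continuous.add
      · exact (continuous_id.smul continuous_const)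
      · exact ((continuous_const.sub continuous_id).smul continuous_const)
    set h : ℝ → ℝ := fun s => f (γ s) - (s * f a + (1 - s) * f b) with hh
    have hhcont : ContinuousOn h (Icc 0 1) := by
      intro s hs
      have h1 : ContinuousAt f (γ s) := hf.continuousAt (hΩ.mem_nhds (hγmem s hs))
      exact ((h1.comp hγcont.continuousAt).sub (by fun_prop)).continuousWithinAt
    have h0 : h 0 = 0 := by simp [hh, hγ]
    have h1' : h 1 = 0 := by simp [hh, hγ]
    -- the key claim: h ≤ 0 on Icc 0 1
    have main : ∀ s ∈ Icc (0 : ℝ) 1, h s ≤ 0 := by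
      by_contra hcon
      push_neg at hcon
      obtain ⟨t', ht', ht'pos⟩ := hcon
      obtain ⟨t0, ht0mem, ht0max⟩ :=
        isCompact_Icc.exists_isMaxOn (nonempty_Icc.2 one_pos.le) hhcont
      have hM : 0 < h t0 := lt_of_lt_of_le ht'pos (ht0max ht')
      set M := h t0 with hMdef
      set S : Set ℝ := {s ∈ Icc (0 : ℝ) 1 | h s = M} with hS
      have hSne : S.Nonempty := ⟨t0, ht0mem, rfl⟩
      have hSbdd : BddAbove S := ⟨1, fun s hs => hs.1.2⟩
      have hSclosed : IsClosed S := by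
        have := hhcont.preimage_isClosed_of_isClosed isClosed_Icc
          (isClosed_singleton (x := M))
        exact this
      have ht1mem : sSup S ∈ S := hSclosed.csSup_mem hSne hSbdd
      set t1 := sSup S with ht1def
      obtain ⟨ht1Icc, ht1M⟩ := ht1mem
      have ht1ne0 : t1 ≠ 0 := by intro e; rw [e, h0] at ht1M; linarith
      have ht1ne1 : t1 ≠ 1 := by intro e; rw [e, h1'] at ht1M; linarith
      have ht1pos : 0 < t1 := lt_of_le_of_ne ht1Icc.1 (Ne.symm ht1ne0)
      have ht1lt1 : t1 < 1 := lt_of_le_of_ne ht1Icc.2 ht1ne1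
      obtain ⟨r, hr, hball, hconv⟩ := hloc (γ t1) (hγmem t1 ht1Icc)
      set δ := min (min t1 (1 - t1)) (r / (‖a - b‖ + 1)) with hδdef
      have hnorm : (0 : ℝ) ≤ ‖a - b‖ := norm_nonneg _
      have hδpos : 0 < δ := by
        apply lt_min (lt_min ht1pos (by linarith))
        positivity
      have hδ1 : δ ≤ t1 := le_trans (min_le_left _ _) (min_le_left _ _)
      have hδ2 : δ ≤ 1 - t1 := le_trans (min_le_left _ _) (min_le_right _ _)
      have hδ3 : δ * ‖a - b‖ < r := by
        have h4 : δ ≤ r / (‖a - b‖ + 1) := min_le_right _ _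
        have h5 : δ * (‖a - b‖ + 1) ≤ r := by
          rw [← le_div_iff₀ (by positivity)]; exact h4
        nlinarith
      have hdist : ∀ s : ℝ, |s - t1| ≤ δ → γ s ∈ ball (γ t1) r := by
        intro s hs
        have hdiff : γ s - γ t1 = (s - t1) • (a - b) := by
          simp only [hγ]; module
        rw [mem_ball, dist_eq_norm, hdiff, norm_smul, Real.norm_eq_abs]
        calc |s - t1| * ‖a - b‖ ≤ δ * ‖a - b‖ := by
              exact mul_le_mul_of_nonneg_right hs hnorm
          _ < r := hδ3
      have hm1 : γ (t1 - δ) ∈ ball (γ t1) r := hdist _ (by rw [abs_of_nonpos] <;> linarith)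
      have hm2 : γ (t1 + δ) ∈ ball (γ t1) r := hdist _ (by rw [abs_of_nonneg] <;> linarith)
      have hmid : γ t1 = (1/2 : ℝ) • γ (t1 - δ) + (1/2 : ℝ) • γ (t1 + δ) := by
        simp only [hγ]; module
      have hcvx := hconv.2 hm1 hm2 (by norm_num : (0:ℝ) ≤ 1/2) (by norm_num : (0:ℝ) ≤ 1/2)
        (by norm_num : (1/2 : ℝ) + 1/2 = 1)
      rw [← hmid] at hcvx
      simp only [smul_eq_mul] at hcvx
      have hkey : h t1 ≤ (h (t1 - δ) + h (t1 + δ)) / 2 := by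
        simp only [hh]
        nlinarith [hcvx]
      have hIcc1 : t1 - δ ∈ Icc (0 : ℝ) 1 := ⟨by linarith, by linarith⟩
      have hIcc2 : t1 + δ ∈ Icc (0 : ℝ) 1 := ⟨by linarith, by linarith⟩
      have hle1 : h (t1 - δ) ≤ M := ht0max hIcc1
      have hle2 : h (t1 + δ) < M := by
        rcases lt_or_eq_of_le (show h (t1 + δ) ≤ M from ht0max hIcc2) with hlt | heq
        · exact hlt
        · exfalso
          have : t1 + δ ∈ S := ⟨hIcc2, heq⟩
          have := le_csSup hSbdd this
          linarith
      clear_value M t1 δ h γ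
      linarith [ht1M, hkey, hle1, hle2]
    have := main t ht
    simp only [hh, hγ] at this
    linarith
  refine ⟨key, fun hc => ⟨hc, ?_⟩⟩
  intro x hx y hy u v hu hv huv
  have hv' : v = 1 - u := by linarith
  subst hv'
  exact key x hx y hy (hc.segment_subset hx hy) u ⟨hu, by linarith⟩
end

section
/- Let Ω ⊂ ℝ^d be convex and let f : ℝ^d → ℝ be continuous. If the restriction of f to Ω is convex, and if there exists a convex function g : ℝ^d → ℝ with g ≤ f on ℝ^d and g = f on ℝ^d \ Ω, then f is convex on ℝ^d. -/
open Set

section Aux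

variable {E : Type*} [NormedAddCommGroup E] [NormedSpace ℝ E]

/-- A convex function on a convex set, continuous globally, is convex on the closure. -/
lemma aux_convexOn_closure {Ω : Set E} {f : E → ℝ} (hΩ : Convex ℝ Ω)
    (hf : Continuous f) (h : ConvexOn ℝ Ω f) : ConvexOn ℝ (closure Ω) f := by
  refine ⟨hΩ.closure, ?_⟩
  intro x hx y hy a b ha hb hab
  have hS : IsClosed {p : E × E | f (a • p.1 + b • p.2) ≤ a * f p.1 + b * f p.2} :=
    isClosed_le (hf.comp (by fun_prop)) (by fun_prop)
  have hmem : (x, y) ∈ closure (Ω ×ˢ Ω) := by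
    rw [closure_prod_eq]; exact ⟨hx, hy⟩
  have := (hS.closure_subset_iff.2 fun p hp => by
    simpa using h.2 hp.1 hp.2 ha hb hab) hmem
  simpa using this

/-- Key endpoint lemma: approach `Ω` along the segment from `x` to `y`. -/
lemma aux_endpoint {Ω : Set E} {f g : E → ℝ} (hf : Continuous f) (hgc : Continuous g)
    (hgconv : ConvexOn ℝ Set.univ g) (hle : ∀ x, g x ≤ f x) (heq : ∀ x ∉ Ω, g x = f x)
    (x y : E)
    (hA : ({s : ℝ | s ∈ Icc (0:ℝ) 1 ∧ x + s • (y - x) ∈ Ω}).Nonempty) :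
    sInf {s : ℝ | s ∈ Icc (0:ℝ) 1 ∧ x + s • (y - x) ∈ Ω} ∈ Icc (0:ℝ) 1 ∧
    x + (sInf {s : ℝ | s ∈ Icc (0:ℝ) 1 ∧ x + s • (y - x) ∈ Ω}) • (y - x) ∈ closure Ω ∧
    f (x + (sInf {s : ℝ | s ∈ Icc (0:ℝ) 1 ∧ x + s • (y - x) ∈ Ω}) • (y - x)) ≤
      (1 - sInf {s : ℝ | s ∈ Icc (0:ℝ) 1 ∧ x + s • (y - x) ∈ Ω}) * f x +
      (sInf {s : ℝ | s ∈ Icc (0:ℝ) 1 ∧ x + s • (y - x) ∈ Ω}) * f y := by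
  set A := {s : ℝ | s ∈ Icc (0:ℝ) 1 ∧ x + s • (y - x) ∈ Ω} with hAdef
  have hbdd : BddBelow A := ⟨0, fun s hs => hs.1.1⟩
  set α := sInf A with hα
  have hα0 : 0 ≤ α := le_csInf hA fun s hs => hs.1.1
  obtain ⟨s₀, hs₀⟩ := id hA
  have hα1 : α ≤ 1 := le_trans (csInf_le hbdd hs₀) hs₀.1.2
  have hL : Continuous fun s : ℝ => x + s • (y - x) := by fun_prop
  have hcl : x + α • (y - x) ∈ closure Ω := by
    have h1 : α ∈ closure A := csInf_mem_closure hA hbdd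
    exact map_mem_closure (f := fun s : ℝ => x + s • (y - x)) hL h1 fun s hs => hs.2
  refine ⟨⟨hα0, hα1⟩, hcl, ?_⟩
  by_cases hx : x ∈ Ω
  · have h0A : (0:ℝ) ∈ A := ⟨⟨le_refl 0, zero_le_one⟩, by simpa using hx⟩
    have : α = 0 := le_antisymm (csInf_le hbdd h0A) hα0
    rw [this]; simp
  · -- f (x + α • (y - x)) = g (x + α • (y - x))
    have hkey : f (x + α • (y - x)) = g (x + α • (y - x)) := by
      by_cases hmem : x + α • (y - x) ∈ Ω
      · have hαpos : 0 < α := by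
          rcases lt_or_eq_of_le hα0 with h | h
          · exact h
          · exfalso; apply hx; rw [← h] at hmem; simpa using hmem
        have heqon : EqOn (fun s : ℝ => g (x + s • (y - x)))
            (fun s : ℝ => f (x + s • (y - x))) (Ico 0 α) := by
          intro s hs
          have hsnot : x + s • (y - x) ∉ Ω := by
            intro hc
            have : s ∈ A := ⟨⟨hs.1, le_trans (le_of_lt hs.2) hα1⟩, hc⟩
            exact absurd (csInf_le hbdd this) (not_le.2 hs.2)
          exact heq _ hsnot
        have hclo : EqOn (fun s : ℝ => g (x + s • (y - x)))
            (fun s : ℝ => f (x + s • (y - x))) (closure (Ico 0 α)) :=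
          heqon.closure (hgc.comp hL) (hf.comp hL)
        have : α ∈ closure (Ico (0:ℝ) α) := by
          rw [closure_Ico (ne_of_lt hαpos)]; exact ⟨hα0, le_refl α⟩
        exact (hclo this).symm
      · exact (heq _ hmem).symm
    have hrw : x + α • (y - x) = (1 - α) • x + α • y := by module
    have hgineq : g ((1 - α) • x + α • y) ≤ (1 - α) * g x + α * g y := by
      simpa using hgconv.2 (mem_univ x) (mem_univ y) (by linarith : (0:ℝ) ≤ 1 - α) hα0
        (by ring : (1 - α) + α = 1)
    calc f (x + α • (y - x)) = g ((1 - α) • x + α • y) := by rw [hkey, hrw]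
      _ ≤ (1 - α) * g x + α * g y := hgineq
      _ ≤ (1 - α) * f x + α * f y := by
          gcongr <;> [exact hle x; exact hle y]

end Aux

theorem stmt_18 (d : ℕ) (Ω : Set (EuclideanSpace ℝ (Fin d))) (hΩ : Convex ℝ Ω)
    (f : EuclideanSpace ℝ (Fin d) → ℝ) (hf : Continuous f)
    (hfconv : ConvexOn ℝ Ω f)
    (hg : ∃ g : EuclideanSpace ℝ (Fin d) → ℝ, ConvexOn ℝ Set.univ g ∧
      (∀ x, g x ≤ f x) ∧ ∀ x ∉ Ω, g x = f x) :
    ConvexOn ℝ Set.univ f := by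
  obtain ⟨g, hgconv, hle, heq⟩ := hg
  have hgc : Continuous g := by
    rw [← continuousOn_univ]
    exact hgconv.continuousOn isOpen_univ
  have hfcl : ConvexOn ℝ (closure Ω) f := aux_convexOn_closure hΩ hf hfconv
  refine ⟨convex_univ, ?_⟩
  intro x _ y _ a b ha hb hab
  simp only [smul_eq_mul]
  by_cases hz : a • x + b • y ∈ Ω
  · -- main case: the midpoint is in Ω
    have ha' : a = 1 - b := by linarith
    have hb1 : b ≤ 1 := by linarith
    have hLz : x + b • (y - x) = a • x + b • y := by rw [ha']; module
    have hLz' : y + a • (x - y) = a • x + b • y := by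
      have hb' : b = 1 - a := by linarith
      rw [hb']; module
    have hA : ({s : ℝ | s ∈ Icc (0:ℝ) 1 ∧ x + s • (y - x) ∈ Ω}).Nonempty :=
      ⟨b, ⟨hb, hb1⟩, by rw [hLz]; exact hz⟩
    have hA' : ({s : ℝ | s ∈ Icc (0:ℝ) 1 ∧ y + s • (x - y) ∈ Ω}).Nonempty :=
      ⟨a, ⟨ha, by linarith⟩, by rw [hLz']; exact hz⟩
    obtain ⟨hαIcc, hαcl, hαineq⟩ := aux_endpoint hf hgc hgconv hle heq x y hA
    obtain ⟨hα'Icc, hα'cl, hα'ineq⟩ := aux_endpoint hf hgc hgconv hle heq y x hA'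
    set α := sInf {s : ℝ | s ∈ Icc (0:ℝ) 1 ∧ x + s • (y - x) ∈ Ω} with hαd
    set α' := sInf {s : ℝ | s ∈ Icc (0:ℝ) 1 ∧ y + s • (x - y) ∈ Ω} with hα'd
    set β := 1 - α' with hβd
    have hbddA : BddBelow {s : ℝ | s ∈ Icc (0:ℝ) 1 ∧ x + s • (y - x) ∈ Ω} :=
      ⟨0, fun s hs => hs.1.1⟩
    have hbddA' : BddBelow {s : ℝ | s ∈ Icc (0:ℝ) 1 ∧ y + s • (x - y) ∈ Ω} :=
      ⟨0, fun s hs => hs.1.1⟩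
    have hαb : α ≤ b := csInf_le hbddA ⟨⟨hb, hb1⟩, by rw [hLz]; exact hz⟩
    have hα'a : α' ≤ a := csInf_le hbddA' ⟨⟨ha, by linarith⟩, by rw [hLz']; exact hz⟩
    have hbβ : b ≤ β := by rw [hβd]; linarith
    -- rewrite the β endpoint in terms of L
    have hβpt : y + α' • (x - y) = x + β • (y - x) := by rw [hβd]; module
    rw [hβpt] at hα'cl hα'ineq
    have hβineq : f (x + β • (y - x)) ≤ (1 - β) * f x + β * f y := by
      have h1 : (1:ℝ) - β = α' := by rw [hβd]; ring
      rw [h1]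
      linarith [hα'ineq]
    rcases eq_or_lt_of_le (le_trans hαb hbβ) with hαβ | hαβ
    · -- α = β, so b = α and the point is the endpoint itself
      have hbα : b = α := le_antisymm (by rw [hαβ]; exact hbβ) hαb
      have h2 : f (a • x + b • y) = f (x + α • (y - x)) := by rw [← hLz, hbα]
      rw [h2, ha', hbα]
      exact hαineq
    · set lam := (β - b) / (β - α) with hlamd
      set mu := (b - α) / (β - α) with hmud
      have hden : 0 < β - α := by linarith
      have hlam0 : 0 ≤ lam := div_nonneg (by linarith) (le_of_lt hden)
      have hmu0 : 0 ≤ mu := div_nonneg (by linarith) (le_of_lt hden)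
      have hlammu : lam + mu = 1 := by
        rw [hlamd, hmud, ← add_div, div_eq_one_iff_eq (ne_of_gt hden)]; ring
      have hcomb : lam * α + mu * β = b := by
        rw [hlamd, hmud]; field_simp; ring
      have hpt : a • x + b • y =
          lam • (x + α • (y - x)) + mu • (x + β • (y - x)) := by
        rw [← hLz, ← hcomb]
        have hmu1 : mu = 1 - lam := by linarith
        rw [hmu1]; module
      have hmain : f (a • x + b • y) ≤ lam * f (x + α • (y - x)) + mu * f (x + β • (y - x)) := by
        rw [hpt]
        simpa using hfcl.2 hαcl hα'cl hlam0 hmu0 hlammu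
      have hfinal : lam * ((1 - α) * f x + α * f y) + mu * ((1 - β) * f x + β * f y) =
          a * f x + b * f y := by
        linear_combination f x * hlammu + (f y - f x) * hcomb - f x * hab
      calc f (a • x + b • y) ≤ lam * f (x + α • (y - x)) + mu * f (x + β • (y - x)) := hmain
        _ ≤ lam * ((1 - α) * f x + α * f y) + mu * ((1 - β) * f x + β * f y) := by
            gcongr
        _ = a * f x + b * f y := hfinal
  · -- midpoint not in Ω: use g
    calc f (a • x + b • y) = g (a • x + b • y) := (heq _ hz).symm
      _ ≤ a * g x + b * g y := by simpa using hgconv.2 (mem_univ x) (mem_univ y) ha hb hab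
      _ ≤ a * f x + b * f y := by gcongr <;> [exact hle x; exact hle y]
end
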